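/- arXiv:2504.00545 — 7 statements merged into one kernel-verified Lean document; each statement's English description precedes it below -/
import Mathlib

section
/- For fixed α, β > 0, lim_{|z|→∞} d_{α,β}(z,0) / e^{β²|z|²/(4α)} = 1, where d_{α,β}(z,0) = ∫_{ℂⁿ} |e^{β z·ū} − 1| dλ_α(u). -/
open MeasureTheory
open scoped InnerProductSpace

/-- `ℂⁿ` carries the Lebesgue volume measure (as a finite-dimensional real
inner product space). -/
noncomputable instance (n : ℕ) : MeasureSpace (EuclideanSpace ℂ (Fin n)) := by
  borelize (EuclideanSpace ℂ (Fin n))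
  exact measureSpaceOfInnerProductSpace

/-- The Gaussian density `(α/π)^n e^{-α|u|²}` on `ℂⁿ`, so that
`dλ_α = gaussDensity n α ∂v`. -/
noncomputable def gaussDensity (n : ℕ) (α : ℝ) (u : EuclideanSpace ℂ (Fin n)) : ℝ :=
  (α / Real.pi) ^ n * Real.exp (-α * ‖u‖ ^ 2)

/-- `d_{α,β}(z,w) = ∫_{ℂⁿ} |e^{β z·ū} - e^{β w·ū}| dλ_α(u)`.
Note `z·ū = z₁ū₁ + ⋯ + zₙūₙ = ⟪u, z⟫_ℂ` in Mathlib's convention. -/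
noncomputable def dAB (n : ℕ) (α β : ℝ) (z w : EuclideanSpace ℂ (Fin n)) : ℝ :=
  ∫ u, ‖Complex.exp ((β : ℂ) * ⟪u, z⟫_ℂ) - Complex.exp ((β : ℂ) * ⟪u, w⟫_ℂ)‖ *
    gaussDensity n α u

noncomputable instance auxMeas (n : ℕ) : MeasurableSpace (EuclideanSpace ℂ (Fin n)) := borel _

instance auxBorel (n : ℕ) : BorelSpace (EuclideanSpace ℂ (Fin n)) := ⟨rfl⟩

lemma aux_inner_re (n : ℕ) (u z : EuclideanSpace ℂ (Fin n)) :
    ⟪z, u⟫_ℝ = (⟪u, z⟫_ℂ).re := by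
  rw [real_inner_comm]
  simp [PiLp.inner_apply]

lemma aux_finrank (n : ℕ) : Module.finrank ℝ (EuclideanSpace ℂ (Fin n)) = 2 * n := by
  rw [(WithLp.linearEquiv 2 ℝ _).finrank_eq, Module.finrank_pi_fintype]
  simp [Complex.finrank_real_complex, mul_comm]

lemma aux_integrable (n : ℕ) {α : ℝ} (hα : 0 < α) (β : ℝ) (z : EuclideanSpace ℂ (Fin n)) :
    Integrable (fun u : EuclideanSpace ℂ (Fin n) =>
      Real.exp (β * (⟪u, z⟫_ℂ).re) * gaussDensity n α u) := by
  have hb : 0 < ((α : ℂ)).re := by simpa using hα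
  have h := (GaussianFourier.integrable_cexp_neg_mul_sq_norm_add (V := EuclideanSpace ℂ (Fin n)) hb (β : ℂ) z).re
  have : (fun u : EuclideanSpace ℂ (Fin n) =>
      Real.exp (β * (⟪u, z⟫_ℂ).re) * gaussDensity n α u)
      = fun u => (α / Real.pi) ^ n *
        (Complex.exp (-(α:ℂ) * (‖u‖:ℂ) ^ 2 + (β:ℂ) * (⟪z, u⟫_ℝ : ℂ))).re := by
    funext u
    rw [show (-(α:ℂ) * (‖u‖:ℂ) ^ 2 + (β:ℂ) * (⟪z, u⟫_ℝ : ℂ))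
        = ((-α * ‖u‖ ^ 2 + β * ⟪z, u⟫_ℝ : ℝ) : ℂ) by push_cast; ring,
      ← Complex.ofReal_exp, Complex.ofReal_re, Real.exp_add, aux_inner_re]
    unfold gaussDensity; ring
  rw [this]
  exact h.const_mul _

lemma aux_gauss_integral (n : ℕ) {α : ℝ} (hα : 0 < α) (β : ℝ)
    (z : EuclideanSpace ℂ (Fin n)) :
    ∫ u : EuclideanSpace ℂ (Fin n),
      Real.exp (β * (⟪u, z⟫_ℂ).re) * gaussDensity n α u
      = Real.exp (β ^ 2 * ‖z‖ ^ 2 / (4 * α)) := by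
  have hb : 0 < ((α : ℂ)).re := by simpa using hα
  have h := GaussianFourier.integral_cexp_neg_mul_sq_norm_add (V := EuclideanSpace ℂ (Fin n)) hb (β : ℂ) z
  have hπ : (0:ℝ) < Real.pi := Real.pi_pos
  -- rewrite LHS of h as ofReal of a real integral
  have h1 : ∀ u : EuclideanSpace ℂ (Fin n),
      Complex.exp (-(α:ℂ) * (‖u‖:ℂ) ^ 2 + (β:ℂ) * (⟪z, u⟫_ℝ : ℂ))
        = ((Real.exp (-α * ‖u‖ ^ 2 + β * ⟪z, u⟫_ℝ) : ℝ) : ℂ) := by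
    intro u
    rw [Complex.ofReal_exp]
    congr 1
    push_cast
    ring
  simp only [h1] at h
  have h' : ∫ u : EuclideanSpace ℂ (Fin n),
      ((Real.exp (-α * ‖u‖ ^ 2 + β * ⟪z, u⟫_ℝ) : ℝ) : ℂ)
      = ((∫ u : EuclideanSpace ℂ (Fin n), Real.exp (-α * ‖u‖ ^ 2 + β * ⟪z, u⟫_ℝ) : ℝ) : ℂ) :=
    integral_ofReal
  rw [h'] at h
  -- rewrite RHS of h
  rw [aux_finrank] at h
  have h2 : ((Real.pi : ℂ) / (α : ℂ)) ^ ((2 * n : ℕ) / 2 : ℂ)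
      = (((Real.pi / α) ^ n : ℝ) : ℂ) := by
    have : ((2 * n : ℕ) / 2 : ℂ) = (n : ℂ) := by push_cast; ring
    rw [this, Complex.cpow_natCast]
    push_cast
    ring
  rw [h2, show ((β:ℂ)^2 * (‖z‖:ℂ)^2 / (4 * (α:ℂ))) = ((β^2 * ‖z‖^2 / (4*α) : ℝ) : ℂ) by
      push_cast; ring, ← Complex.ofReal_exp, ← Complex.ofReal_mul] at h
  have h3 : ∫ u : EuclideanSpace ℂ (Fin n), Real.exp (-α * ‖u‖ ^ 2 + β * ⟪z, u⟫_ℝ)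
      = (Real.pi / α) ^ n * Real.exp (β ^ 2 * ‖z‖ ^ 2 / (4 * α)) :=
    Complex.ofReal_inj.mp h
  have h4 : (fun u : EuclideanSpace ℂ (Fin n) =>
      Real.exp (β * (⟪u, z⟫_ℂ).re) * gaussDensity n α u)
      = fun u => (α / Real.pi) ^ n * Real.exp (-α * ‖u‖ ^ 2 + β * ⟪z, u⟫_ℝ) := by
    funext u
    rw [Real.exp_add, aux_inner_re]
    unfold gaussDensity; ring
  rw [h4, integral_const_mul, h3, ← mul_assoc, ← mul_pow]
  rw [div_mul_div_comm]
  rw [show α * Real.pi / (Real.pi * α) = 1 by rw [mul_comm α Real.pi]; field_simp]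
  simp

lemma aux_density_integrable (n : ℕ) {α : ℝ} (hα : 0 < α) :
    Integrable (fun u : EuclideanSpace ℂ (Fin n) => gaussDensity n α u) := by
  have h := aux_integrable n hα 0 0
  simpa using h

lemma aux_density_integral (n : ℕ) {α : ℝ} (hα : 0 < α) :
    ∫ u : EuclideanSpace ℂ (Fin n), gaussDensity n α u = 1 := by
  have h := aux_gauss_integral n hα 0 0
  simpa using h

lemma aux_density_nonneg (n : ℕ) {α : ℝ} (hα : 0 < α) (u : EuclideanSpace ℂ (Fin n)) :
    0 ≤ gaussDensity n α u := by
  unfold gaussDensity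
  have := Real.pi_pos
  positivity


lemma aux_f_integrable (n : ℕ) {α : ℝ} (hα : 0 < α) (β : ℝ) (z : EuclideanSpace ℂ (Fin n)) :
    Integrable (fun u : EuclideanSpace ℂ (Fin n) =>
      ‖Complex.exp ((β : ℂ) * ⟪u, z⟫_ℂ) - 1‖ * gaussDensity n α u) := by
  have hcont : Continuous (fun u : EuclideanSpace ℂ (Fin n) =>
      ‖Complex.exp ((β : ℂ) * ⟪u, z⟫_ℂ) - 1‖ * gaussDensity n α u) := by
    unfold gaussDensity
    have h1 : Continuous fun u : EuclideanSpace ℂ (Fin n) => ⟪u, z⟫_ℂ :=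
      Continuous.inner continuous_id continuous_const
    fun_prop
  have hbd : Integrable (fun u : EuclideanSpace ℂ (Fin n) =>
      Real.exp (β * (⟪u, z⟫_ℂ).re) * gaussDensity n α u + gaussDensity n α u) :=
    (aux_integrable n hα β z).add (aux_density_integrable n hα)
  refine hbd.mono hcont.aestronglyMeasurable (Filter.Eventually.of_forall fun u => ?_)
  have hg := aux_density_nonneg n hα u
  have h2 : ‖Complex.exp ((β : ℂ) * ⟪u, z⟫_ℂ) - 1‖
      ≤ Real.exp (β * (⟪u, z⟫_ℂ).re) + 1 := by
    refine (norm_sub_le _ _).trans ?_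
    rw [Complex.norm_exp]
    simp
  rw [Real.norm_eq_abs, abs_of_nonneg (by positivity), Real.norm_eq_abs]
  have he : 0 ≤ Real.exp (β * (⟪u, z⟫_ℂ).re) * gaussDensity n α u + gaussDensity n α u := by
    positivity
  rw [abs_of_nonneg he]
  nlinarith [Real.exp_pos (β * (⟪u, z⟫_ℂ).re)]

lemma aux_bound (n : ℕ) {α : ℝ} (hα : 0 < α) (β : ℝ) (z : EuclideanSpace ℂ (Fin n)) :
    |dAB n α β z 0 - Real.exp (β ^ 2 * ‖z‖ ^ 2 / (4 * α))| ≤ 1 := by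
  have hd : dAB n α β z 0 = ∫ u : EuclideanSpace ℂ (Fin n),
      ‖Complex.exp ((β : ℂ) * ⟪u, z⟫_ℂ) - 1‖ * gaussDensity n α u := by
    unfold dAB
    congr 1
    funext u
    rw [inner_zero_right]
    simp
  rw [hd, ← aux_gauss_integral n hα β z,
    ← integral_sub (aux_f_integrable n hα β z) (aux_integrable n hα β z)]
  calc |∫ u : EuclideanSpace ℂ (Fin n),
        (‖Complex.exp ((β : ℂ) * ⟪u, z⟫_ℂ) - 1‖ * gaussDensity n α u
          - Real.exp (β * (⟪u, z⟫_ℂ).re) * gaussDensity n α u)|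
      ≤ ∫ u : EuclideanSpace ℂ (Fin n), gaussDensity n α u := by
        rw [← Real.norm_eq_abs]
        refine (norm_integral_le_integral_norm _).trans ?_
        refine integral_mono_of_nonneg (Filter.Eventually.of_forall fun u => norm_nonneg _)
          (aux_density_integrable n hα) (Filter.Eventually.of_forall fun u => ?_)
        have hg := aux_density_nonneg n hα u
        dsimp only
        rw [← sub_mul, Real.norm_eq_abs, abs_mul, abs_of_nonneg hg]
        have h1 : |‖Complex.exp ((β : ℂ) * ⟪u, z⟫_ℂ) - 1‖
            - Real.exp (β * (⟪u, z⟫_ℂ).re)| ≤ 1 := by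
          have : Real.exp (β * (⟪u, z⟫_ℂ).re) = ‖Complex.exp ((β : ℂ) * ⟪u, z⟫_ℂ)‖ := by
            rw [Complex.norm_exp]
            simp
          rw [this]
          refine (abs_norm_sub_norm_le _ _).trans ?_
          simp
        nlinarith [abs_nonneg (‖Complex.exp ((β : ℂ) * ⟪u, z⟫_ℂ) - 1‖
          - Real.exp (β * (⟪u, z⟫_ℂ).re))]
    _ = 1 := aux_density_integral n hα


theorem stmt3 (n : ℕ) (α β : ℝ) (hα : 0 < α) (hβ : 0 < β) :
    Filter.Tendsto
      (fun z : EuclideanSpace ℂ (Fin n) =>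
        dAB n α β z 0 / Real.exp (β ^ 2 * ‖z‖ ^ 2 / (4 * α)))
      (Filter.comap (fun z => ‖z‖) Filter.atTop) (nhds 1) := by
  set l := Filter.comap (fun z : EuclideanSpace ℂ (Fin n) => ‖z‖) Filter.atTop with hl
  have hnorm : Filter.Tendsto (fun z : EuclideanSpace ℂ (Fin n) => ‖z‖) l Filter.atTop :=
    Filter.tendsto_comap
  have hc : Filter.Tendsto
      (fun z : EuclideanSpace ℂ (Fin n) => Real.exp (β ^ 2 * ‖z‖ ^ 2 / (4 * α)))
      l Filter.atTop := by
    refine Real.tendsto_exp_atTop.comp ?_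
    have heq : (fun z : EuclideanSpace ℂ (Fin n) => β ^ 2 * ‖z‖ ^ 2 / (4 * α))
        = fun z => (β ^ 2 / (4 * α)) * ‖z‖ ^ 2 := by funext z; ring
    rw [heq]
    exact (((Filter.tendsto_pow_atTop two_ne_zero).comp hnorm).const_mul_atTop
      (by positivity))
  have h0 : Filter.Tendsto
      (fun z : EuclideanSpace ℂ (Fin n) =>
        (dAB n α β z 0 - Real.exp (β ^ 2 * ‖z‖ ^ 2 / (4 * α)))
          / Real.exp (β ^ 2 * ‖z‖ ^ 2 / (4 * α)))
      l (nhds 0) := by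
    refine squeeze_zero_norm (f := fun z : EuclideanSpace ℂ (Fin n) =>
        (dAB n α β z 0 - Real.exp (β ^ 2 * ‖z‖ ^ 2 / (4 * α)))
          / Real.exp (β ^ 2 * ‖z‖ ^ 2 / (4 * α)))
      (a := fun z : EuclideanSpace ℂ (Fin n) =>
        (Real.exp (β ^ 2 * ‖z‖ ^ 2 / (4 * α)))⁻¹) (fun z => ?_)
      (tendsto_inv_atTop_zero.comp hc)
    rw [Real.norm_eq_abs, abs_div, abs_of_pos (Real.exp_pos _), div_eq_mul_inv]
    exact mul_le_of_le_one_left (by positivity) (aux_bound n hα β z)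
  have hsum := h0.add (tendsto_const_nhds (x := (1:ℝ)) (f := l))
  rw [zero_add] at hsum
  refine hsum.congr fun z => ?_
  have he := (Real.exp_pos (β ^ 2 * ‖z‖ ^ 2 / (4 * α))).ne'
  field_simp
  ring
end

section
/- For every α, β > 0, lim_{z→0} d_{α,β}(z,0)/|z| = β ∫_{ℂⁿ} |u₁| dλ_α(u), where d_{α,β}(z,0) = ∫_{ℂⁿ} |e^{β z·ū} − 1| dλ_α(u). -/
set_option maxHeartbeats 1000000

open MeasureTheory
open scoped InnerProductSpace

noncomputable instance (n : ℕ) : MeasurableSpace (EuclideanSpace ℂ (Fin n)) := MeasureSpace.toMeasurableSpace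

instance (n : ℕ) : BorelSpace (EuclideanSpace ℂ (Fin n)) := ⟨rfl⟩

lemma gauss_nonneg {n : ℕ} {α : ℝ} (hα : 0 < α) (u : EuclideanSpace ℂ (Fin n)) :
    0 ≤ gaussDensity n α u := by
  unfold gaussDensity; positivity

lemma norm_cexp_sub_one_le (z : ℂ) : ‖Complex.exp z - 1‖ ≤ ‖z‖ * Real.exp ‖z‖ := by
  have hder : ∀ t ∈ Set.uIcc (0:ℝ) 1,
      HasDerivAt (fun t : ℝ => Complex.exp ((t:ℂ) * z)) (Complex.exp ((t:ℂ)*z) * z) t := by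
    intro t _
    have h1 : HasDerivAt (fun t : ℝ => ((t:ℂ))) 1 t := by
      simpa using (hasDerivAt_id t).ofReal_comp
    simpa using (h1.mul_const z).cexp
  have hint : IntervalIntegrable (fun t : ℝ => Complex.exp ((t:ℂ)*z) * z) volume 0 1 := by
    apply Continuous.intervalIntegrable
    continuity
  have hftc := intervalIntegral.integral_eq_sub_of_hasDerivAt hder hint
  simp only [Complex.ofReal_one, Complex.ofReal_zero, one_mul, zero_mul, Complex.exp_zero] at hftc
  rw [← hftc]
  have := intervalIntegral.norm_integral_le_of_norm_le_const
    (C := ‖z‖ * Real.exp ‖z‖) (f := fun t : ℝ => Complex.exp ((t:ℂ)*z) * z) (a := 0) (b := 1) ?_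
  · simpa using this
  · intro t ht
    rw [Set.uIoc_of_le one_pos.le] at ht
    rw [norm_mul, mul_comm]
    apply mul_le_mul_of_nonneg_left _ (norm_nonneg z)
    rw [Complex.norm_exp]
    apply Real.exp_le_exp.2
    calc ((t:ℂ)*z).re ≤ ‖(t:ℂ)*z‖ := Complex.re_le_norm _
      _ = |t| * ‖z‖ := by simp
      _ ≤ 1 * ‖z‖ := by
          apply mul_le_mul_of_nonneg_right _ (norm_nonneg z)
          rw [abs_of_pos ht.1]; exact ht.2
      _ = ‖z‖ := one_mul _

lemma gauss_int (n : ℕ) {a : ℝ} (ha : 0 < a) :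
    Integrable (fun u : EuclideanSpace ℂ (Fin n) => Real.exp (-a * ‖u‖^2)) := by
  have h := GaussianFourier.integrable_cexp_neg_mul_sq_norm_add (V := EuclideanSpace ℂ (Fin n))
    (b := (a:ℂ)) (by simpa using ha) 0 0
  refine h.norm.congr (Filter.Eventually.of_forall fun u => ?_)
  simp only [add_zero, zero_mul, Complex.norm_exp, ← Complex.ofReal_pow,
    ← Complex.ofReal_neg, ← Complex.ofReal_mul, Complex.ofReal_re]

lemma cont_coord (n : ℕ) (i : Fin n) :
    Continuous (fun u : EuclideanSpace ℂ (Fin n) => u i) :=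
  (PiLp.proj (𝕜 := ℂ) 2 (fun _ : Fin n => ℂ) i).continuous

lemma cont_gauss (n : ℕ) (α : ℝ) : Continuous (gaussDensity n α) := by
  unfold gaussDensity
  fun_prop

lemma bound_integrable (n : ℕ) (i0 : Fin n) (α β : ℝ) (hα : 0 < α) (hβ : 0 < β) :
    Integrable (fun u : EuclideanSpace ℂ (Fin n) =>
      β * ‖u i0‖ * Real.exp (β * ‖u i0‖) * gaussDensity n α u) := by
  set C : ℝ := (α / Real.pi) ^ n with hC
  have hC0 : 0 ≤ C := by positivity
  have hint : Integrable (fun u : EuclideanSpace ℂ (Fin n) =>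
      (β * C * Real.exp ((1+β)^2/(2*α))) * Real.exp (-(α/2) * ‖u‖^2)) :=
    (gauss_int n (by positivity)).const_mul _
  refine hint.mono' ?_ (Filter.Eventually.of_forall fun u => ?_)
  · apply Continuous.aestronglyMeasurable
    have h1 : Continuous (fun u : EuclideanSpace ℂ (Fin n) => ‖u i0‖) :=
      continuous_norm.comp (cont_coord n i0)
    have := cont_gauss n α
    fun_prop
  · set x : ℝ := ‖u i0‖ with hx
    have hx0 : 0 ≤ x := norm_nonneg _
    have hxr : x ≤ ‖u‖ := by
      rw [hx, EuclideanSpace.norm_eq]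
      refine (Real.le_sqrt (norm_nonneg _) (by positivity)).2 ?_
      exact Finset.single_le_sum (fun i _ => sq_nonneg ‖u i‖) (Finset.mem_univ i0)
    set r : ℝ := ‖u‖ with hr
    have hr0 : 0 ≤ r := norm_nonneg u
    have key : x * Real.exp (β * x) * Real.exp (-(α/2) * r^2) ≤ Real.exp ((1+β)^2/(2*α)) := by
      calc x * Real.exp (β * x) * Real.exp (-(α/2) * r^2)
          ≤ Real.exp x * Real.exp (β * x) * Real.exp (-(α/2) * r^2) := by
            have : x ≤ Real.exp x := (Real.add_one_le_exp x).trans' (by linarith)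
            gcongr
        _ = Real.exp (x + β * x + -(α/2) * r^2) := by rw [← Real.exp_add, ← Real.exp_add]
        _ ≤ Real.exp ((1+β)^2/(2*α)) := by
            apply Real.exp_le_exp.2
            have h2 : x + β * x ≤ (1+β) * r := by nlinarith
            have h3 : (1+β) * r - (α/2) * r^2 ≤ (1+β)^2/(2*α) := by
              rw [le_div_iff₀ (by linarith : (0:ℝ) < 2*α)]
              nlinarith [sq_nonneg (1 + β - α * r)]
            linarith
    have hgd : gaussDensity n α u = C * Real.exp (-α * r^2) := rfl
    have hsplit : Real.exp (-α * r^2) = Real.exp (-(α/2) * r^2) * Real.exp (-(α/2) * r^2) := by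
      rw [← Real.exp_add]; ring_nf
    have hnn : (0:ℝ) ≤ β * x * Real.exp (β * x) * gaussDensity n α u :=
      mul_nonneg (mul_nonneg (mul_nonneg hβ.le hx0) (Real.exp_nonneg _))
        (by rw [hgd]; exact mul_nonneg hC0 (Real.exp_nonneg _))
    rw [Real.norm_eq_abs, abs_of_nonneg hnn, hgd, hsplit]
    calc β * x * Real.exp (β * x) * (C * (Real.exp (-(α/2) * r^2) * Real.exp (-(α/2) * r^2)))
        = (β * C) * (x * Real.exp (β * x) * Real.exp (-(α/2) * r^2)) * Real.exp (-(α/2) * r^2) := by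
          ring
      _ ≤ (β * C) * Real.exp ((1+β)^2/(2*α)) * Real.exp (-(α/2) * r^2) := by
          have hbC : 0 ≤ β * C := by positivity
          gcongr
      _ = β * C * Real.exp ((1+β)^2/(2*α)) * Real.exp (-(α/2) * r^2) := by ring

noncomputable def realIso {n : ℕ} (U : EuclideanSpace ℂ (Fin n) ≃ₗᵢ[ℂ] EuclideanSpace ℂ (Fin n)) :
    EuclideanSpace ℂ (Fin n) ≃ₗᵢ[ℝ] EuclideanSpace ℂ (Fin n) :=
  ⟨U.toLinearEquiv.restrictScalars ℝ, U.norm_map⟩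

theorem dAB_rot (n : ℕ) (hn : 0 < n) (α β : ℝ) (z : EuclideanSpace ℂ (Fin n)) (hz : z ≠ 0) :
    dAB n α β z 0 = ∫ u : EuclideanSpace ℂ (Fin n),
      ‖Complex.exp ((β : ℂ) * ((‖z‖ : ℂ) * (starRingEnd ℂ) (u ⟨0, hn⟩))) - 1‖ *
        gaussDensity n α u := by
  set i0 : Fin n := ⟨0, hn⟩
  set w : EuclideanSpace ℂ (Fin n) := ‖z‖⁻¹ • z with hw_def
  have hw : ‖w‖ = 1 := norm_smul_inv_norm hz
  have horth : Orthonormal ℂ (Set.restrict {i0} (fun _ : Fin n => w)) := by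
    constructor
    · intro i; exact hw
    · rintro ⟨i, hi⟩ ⟨j, hj⟩ hij
      exact absurd (Subtype.ext ((hi.trans hj.symm : (i:Fin n) = j) : (i:Fin n) = j)) hij
  have hcard : Module.finrank ℂ (EuclideanSpace ℂ (Fin n)) = Fintype.card (Fin n) :=
    finrank_euclideanSpace
  obtain ⟨b, hb⟩ := horth.exists_orthonormalBasis_extension_of_card_eq hcard
  set U : EuclideanSpace ℂ (Fin n) ≃ₗᵢ[ℂ] EuclideanSpace ℂ (Fin n) := b.repr.symm with hU_def
  have hU : U (EuclideanSpace.single i0 1) = w := by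
    rw [hU_def, OrthonormalBasis.repr_symm_single]
    exact hb i0 rfl
  have hmp : MeasurePreserving (realIso U) volume volume :=
    (realIso U).measurePreserving
  have hemb : MeasurableEmbedding (realIso U) :=
    (realIso U).toHomeomorph.measurableEmbedding
  have hcomp := hmp.integral_comp hemb
    (fun u : EuclideanSpace ℂ (Fin n) =>
      ‖Complex.exp ((β : ℂ) * ⟪u, z⟫_ℂ) - 1‖ * gaussDensity n α u)
  rw [dAB]
  simp only [inner_zero_right, mul_zero, Complex.exp_zero]
  rw [← hcomp]
  congr 1
  ext u
  have hru : (realIso U) u = U u := rfl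
  have hz_eq : z = (‖z‖ : ℂ) • w := by
    rw [Complex.coe_smul, hw_def, smul_inv_smul₀ (norm_ne_zero_iff.2 hz)]
  have hinner : ⟪U u, z⟫_ℂ = (‖z‖ : ℂ) * (starRingEnd ℂ) (u i0) := by
    conv_lhs => rw [hz_eq, ← hU]
    rw [inner_smul_right, ← LinearIsometryEquiv.inner_map_map U]
    simp [EuclideanSpace.inner_single_right]
  have hg : gaussDensity n α (U u) = gaussDensity n α u := by
    unfold gaussDensity; rw [LinearIsometryEquiv.norm_map]
  rw [hru, hinner, hg]

theorem stmt4 (n : ℕ) (hn : 0 < n) (α β : ℝ) (hα : 0 < α) (hβ : 0 < β) :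
    Filter.Tendsto
      (fun z : EuclideanSpace ℂ (Fin n) => dAB n α β z 0 / ‖z‖)
      (nhdsWithin 0 {0}ᶜ)
      (nhds (β * ∫ u : EuclideanSpace ℂ (Fin n),
        ‖u ⟨0, hn⟩‖ * gaussDensity n α u)) := by
  set i0 : Fin n := ⟨0, hn⟩ with hi0
  set Φ : ℝ → ℝ := fun t =>
    (∫ u : EuclideanSpace ℂ (Fin n),
      ‖Complex.exp ((β : ℂ) * ((t : ℂ) * (starRingEnd ℂ) (u i0))) - 1‖ * gaussDensity n α u) / t
    with hΦdef
  have hmain : Filter.Tendsto Φ (nhdsWithin 0 (Set.Ioi 0))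
      (nhds (β * ∫ u : EuclideanSpace ℂ (Fin n),
        ‖u i0‖ * gaussDensity n α u)) := by
    have hψ : Filter.Tendsto (fun t : ℝ => ∫ u : EuclideanSpace ℂ (Fin n),
        (‖Complex.exp ((β : ℂ) * ((t : ℂ) * (starRingEnd ℂ) (u i0))) - 1‖ *
          gaussDensity n α u) / t)
        (nhdsWithin 0 (Set.Ioi 0))
        (nhds (∫ u : EuclideanSpace ℂ (Fin n),
          β * (‖u i0‖ * gaussDensity n α u))) := by
      apply tendsto_integral_filter_of_dominated_convergence
        (bound := fun u : EuclideanSpace ℂ (Fin n) =>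
          β * ‖u i0‖ * Real.exp (β * ‖u i0‖) * gaussDensity n α u)
      · apply Filter.Eventually.of_forall; intro t
        apply Continuous.aestronglyMeasurable
        have h1 := cont_coord n i0
        have h2 := cont_gauss n α
        have h3 : Continuous fun u : EuclideanSpace ℂ (Fin n) => (starRingEnd ℂ) (u i0) :=
          Complex.continuous_conj.comp h1
        fun_prop
      · filter_upwards [Ioc_mem_nhdsGT_of_mem (Set.left_mem_Ico.2 one_pos)] with t ht
        apply Filter.Eventually.of_forall; intro u
        have hg0 : 0 ≤ gaussDensity n α u := gauss_nonneg hα u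
        have hkey := norm_cexp_sub_one_le ((β : ℂ) * ((t : ℂ) * (starRingEnd ℂ) (u i0)))
        have hnorm_arg : ‖(β : ℂ) * ((t : ℂ) * (starRingEnd ℂ) (u i0))‖
            = t * (β * ‖u i0‖) := by
          simp [abs_of_pos hβ, abs_of_pos ht.1]
          ring
        rw [hnorm_arg] at hkey
        have hexp_le : Real.exp (t * (β * ‖u i0‖))
            ≤ Real.exp (β * ‖u i0‖) := by
          apply Real.exp_le_exp.2
          have h0 : 0 ≤ β * ‖u i0‖ :=
            mul_nonneg hβ.le (norm_nonneg _)
          nlinarith [ht.2, ht.1]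
        have hnum : ‖Complex.exp ((β : ℂ) * ((t : ℂ) * (starRingEnd ℂ) (u i0))) - 1‖
            ≤ t * (β * ‖u i0‖ * Real.exp (β * ‖u i0‖)) := by
          refine hkey.trans ?_
          calc t * (β * ‖u i0‖) * Real.exp (t * (β * ‖u i0‖))
              ≤ t * (β * ‖u i0‖) * Real.exp (β * ‖u i0‖) := by
                have : 0 ≤ t * (β * ‖u i0‖) :=
                  mul_nonneg ht.1.le (mul_nonneg hβ.le (norm_nonneg _))
                exact mul_le_mul_of_nonneg_left hexp_le this
            _ = t * (β * ‖u i0‖ * Real.exp (β * ‖u i0‖)) := by ring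
        have hnn : 0 ≤ (‖Complex.exp ((β : ℂ) * ((t : ℂ) * (starRingEnd ℂ) (u i0))) - 1‖ *
            gaussDensity n α u) / t :=
          div_nonneg (mul_nonneg (norm_nonneg _) hg0) ht.1.le
        rw [Real.norm_eq_abs, abs_of_nonneg hnn, div_le_iff₀ ht.1]
        calc ‖Complex.exp ((β : ℂ) * ((t : ℂ) * (starRingEnd ℂ) (u i0))) - 1‖ * gaussDensity n α u
            ≤ (t * (β * ‖u i0‖ * Real.exp (β * ‖u i0‖))) *
              gaussDensity n α u := mul_le_mul_of_nonneg_right hnum hg0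
          _ = β * ‖u i0‖ * Real.exp (β * ‖u i0‖) * gaussDensity n α u * t
            := by ring
      · exact bound_integrable n i0 α β hα hβ
      · apply Filter.Eventually.of_forall; intro u
        set A : ℂ := (β : ℂ) * (starRingEnd ℂ) (u i0) with hA
        have harg : ∀ t : ℝ, (β : ℂ) * ((t : ℂ) * (starRingEnd ℂ) (u i0)) = (t : ℂ) * A := by
          intro t; rw [hA]; ring
        have hder : HasDerivAt (fun t : ℝ => Complex.exp ((t : ℂ) * A)) A 0 := by
          have h1 : HasDerivAt (fun t : ℝ => ((t : ℂ))) 1 0 := by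
            simpa using (hasDerivAt_id (0:ℝ)).ofReal_comp
          simpa using (h1.mul_const A).cexp
        have hslope := hasDerivAt_iff_tendsto_slope.mp hder
        have h2 : Filter.Tendsto
            (fun t : ℝ => ‖slope (fun s : ℝ => Complex.exp ((s : ℂ) * A)) 0 t‖)
            (nhdsWithin 0 (Set.Ioi 0)) (nhds ‖A‖) :=
          (hslope.norm).mono_left
            (nhdsWithin_mono 0 (fun t ht => ne_of_gt ht))
        have h3 := h2.mul_const (gaussDensity n α u)
        have hval : ‖A‖ * gaussDensity n α u
            = β * (‖u i0‖ * gaussDensity n α u) := by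
          rw [hA]
          simp [abs_of_pos hβ]
          ring
        rw [hval] at h3
        refine h3.congr' ?_
        filter_upwards [self_mem_nhdsWithin] with t ht
        have ht0 : (0:ℝ) < t := ht
        rw [slope_def_module]
        simp only [sub_zero, Complex.ofReal_zero, zero_mul, Complex.exp_zero]
        rw [norm_smul, harg t]
        simp [Real.norm_eq_abs, abs_of_pos ht0, inv_mul_eq_div]
        ring
    have heq : ∀ t : ℝ, (∫ u : EuclideanSpace ℂ (Fin n),
        (‖Complex.exp ((β : ℂ) * ((t : ℂ) * (starRingEnd ℂ) (u i0))) - 1‖ *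
          gaussDensity n α u) / t) = Φ t := by
      intro t
      rw [hΦdef]
      exact integral_div t _
    have hlim_eq : (∫ u : EuclideanSpace ℂ (Fin n),
        β * (‖u i0‖ * gaussDensity n α u))
        = β * ∫ u : EuclideanSpace ℂ (Fin n), ‖u i0‖ * gaussDensity n α u :=
      integral_const_mul β _
    rw [hlim_eq] at hψ
    exact hψ.congr heq
  have hnorm : Filter.Tendsto (fun z : EuclideanSpace ℂ (Fin n) => ‖z‖)
      (nhdsWithin 0 {0}ᶜ) (nhdsWithin 0 (Set.Ioi 0)) := by
    apply tendsto_nhdsWithin_of_tendsto_nhds_of_eventually_within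
    · have := (continuous_norm.tendsto (0 : EuclideanSpace ℂ (Fin n))).mono_left
        (nhdsWithin_le_nhds (s := {0}ᶜ))
      simpa using this
    · filter_upwards [self_mem_nhdsWithin] with z hz
      exact norm_pos_iff.2 hz
  have hcomp := hmain.comp hnorm
  refine hcomp.congr' ?_
  filter_upwards [self_mem_nhdsWithin] with z hz
  have : Φ ‖z‖ = dAB n α β z 0 / ‖z‖ := by
    rw [hΦdef, dAB_rot n hn α β z hz]
  simpa [Function.comp] using this
end

section
/- For all α > 0 and all z ∈ ℂⁿ, ∫_{ℂⁿ} Re(w·ū) |e^{α z·ū}| dλ_{α/2}(u) = |z| e^{α|z|²/2}, where z = |z| w with |w| = 1 (and the left side is 0 when z = 0). -/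
open MeasureTheory
open scoped InnerProductSpace

lemma aux_odd (b : ℝ) : ∫ x : ℝ, x * Real.exp (-b * x ^ 2) = 0 := by
  have h : (∫ x : ℝ, x * Real.exp (-b * x ^ 2))
      = - ∫ x : ℝ, x * Real.exp (-b * x ^ 2) := by
    conv_lhs => rw [← integral_neg_eq_self (fun x : ℝ => x * Real.exp (-b * x ^ 2)) volume]
    rw [← integral_neg]
    congr 1
    funext x
    rw [neg_sq]
    ring
  linarith

lemma aux_shift {b : ℝ} (t : ℝ) (hb : 0 < b) :
    ∫ x : ℝ, x * Real.exp (-b * (x - t) ^ 2) = t * Real.sqrt (Real.pi / b) := by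
  have h := integral_add_right_eq_self (μ := volume)
    (fun x : ℝ => x * Real.exp (-b * (x - t) ^ 2)) t
  rw [← h]
  have hpt : ∀ x : ℝ, (x + t) * Real.exp (-b * (x + t - t) ^ 2)
      = x * Real.exp (-b * x ^ 2) + t * Real.exp (-b * x ^ 2) := by
    intro x; rw [add_sub_cancel_right]; ring
  simp_rw [hpt]
  rw [integral_add (integrable_mul_exp_neg_mul_sq hb)
    ((integrable_exp_neg_mul_sq hb).const_mul t), aux_odd, integral_const_mul,
    integral_gaussian, zero_add]

lemma aux_main1d (p t : ℝ) (hp : 0 < p) :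
    ∫ x : ℝ, (x * Real.exp (p * t * x)) *
        (Real.sqrt (p / (2 * Real.pi)) * Real.exp (-(p / 2) * x ^ 2))
      = t * Real.exp (p * t ^ 2 / 2) := by
  have hπ := Real.pi_pos
  have key : ∀ x : ℝ, (x * Real.exp (p * t * x)) *
        (Real.sqrt (p / (2 * Real.pi)) * Real.exp (-(p / 2) * x ^ 2))
      = (Real.sqrt (p / (2 * Real.pi)) * Real.exp (p * t ^ 2 / 2)) *
        (x * Real.exp (-(p / 2) * (x - t) ^ 2)) := by
    intro x
    have hexp : p * t * x + (-(p / 2) * x ^ 2)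
        = p * t ^ 2 / 2 + (-(p / 2) * (x - t) ^ 2) := by ring
    calc (x * Real.exp (p * t * x)) *
          (Real.sqrt (p / (2 * Real.pi)) * Real.exp (-(p / 2) * x ^ 2))
        = x * Real.sqrt (p / (2 * Real.pi)) *
            Real.exp (p * t * x + (-(p / 2) * x ^ 2)) := by rw [Real.exp_add]; ring
      _ = x * Real.sqrt (p / (2 * Real.pi)) *
            Real.exp (p * t ^ 2 / 2 + (-(p / 2) * (x - t) ^ 2)) := by rw [hexp]
      _ = _ := by rw [Real.exp_add]; ring
  simp_rw [key]
  rw [integral_const_mul, aux_shift t (by positivity : (0:ℝ) < p / 2)]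
  have hone : Real.sqrt (p / (2 * Real.pi)) * Real.sqrt (Real.pi / (p / 2)) = 1 := by
    rw [← Real.sqrt_mul (by positivity)]
    rw [show p / (2 * Real.pi) * (Real.pi / (p / 2)) = 1 by
      field_simp]
    exact Real.sqrt_one
  linear_combination t * Real.exp (p * t ^ 2 / 2) * hone

lemma aux_gauss_one (p : ℝ) (hp : 0 < p) :
    ∫ x : ℝ, Real.sqrt (p / (2 * Real.pi)) * Real.exp (-(p / 2) * x ^ 2) = 1 := by
  have hπ := Real.pi_pos
  rw [integral_const_mul, integral_gaussian, ← Real.sqrt_mul (by positivity)]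
  rw [show p / (2 * Real.pi) * (Real.pi / (p / 2)) = 1 by field_simp]
  exact Real.sqrt_one

lemma aux_re_inner {n : ℕ} (u w : EuclideanSpace ℂ (Fin n)) :
    ⟪u, w⟫_ℝ = (⟪u, w⟫_ℂ).re := by
  simp [PiLp.inner_apply, Complex.inner, Complex.re_sum]

theorem stmt7 (n : ℕ) (α : ℝ) (hα : 0 < α) (z w : EuclideanSpace ℂ (Fin n))
    (hw : ‖w‖ = 1) (hz : z = ‖z‖ • w) :
    ∫ u, (⟪u, w⟫_ℂ).re * ‖Complex.exp ((α : ℂ) * ⟪u, z⟫_ℂ)‖ *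
        gaussDensity n (α / 2) u =
      ‖z‖ * Real.exp (α * ‖z‖ ^ 2 / 2) := by
  have hπ : (0:ℝ) < Real.pi := Real.pi_pos
  rcases Nat.eq_zero_or_pos n with hn | hn
  · exfalso
    subst hn
    have hw0 : w = 0 := Subsingleton.elim w 0
    rw [hw0, norm_zero] at hw
    norm_num at hw
  haveI : NeZero (2 * n) := ⟨by omega⟩
  letI : MeasurableSpace (EuclideanSpace ℂ (Fin n)) := MeasureSpace.toMeasurableSpace
  haveI hbor : BorelSpace (EuclideanSpace ℂ (Fin n)) := ⟨rfl⟩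
  set t := ‖z‖ with ht
  have hcard : Module.finrank ℝ (EuclideanSpace ℂ (Fin n)) = Fintype.card (Fin (2 * n)) := by
    rw [Fintype.card_fin, ← Module.finrank_mul_finrank ℝ ℂ (EuclideanSpace ℂ (Fin n)),
      Complex.finrank_real_complex, finrank_euclideanSpace, Fintype.card_fin]
  have horth : Orthonormal ℝ
      (Set.restrict ({0} : Set (Fin (2 * n))) (fun _ => w)) := by
    constructor
    · intro i; exact hw
    · intro i j hij
      exact absurd (Subtype.ext ((Set.mem_singleton_iff.mp i.2).trans
        (Set.mem_singleton_iff.mp j.2).symm)) hij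
  obtain ⟨b, hb⟩ := horth.exists_orthonormalBasis_extension_of_card_eq hcard
  have hb0 : b 0 = w := hb 0 rfl
  -- transport the integral to `Fin (2*n) → ℝ`
  have e1 := (b.measurePreserving_measurableEquiv.symm).integral_comp
      (MeasurableEquiv.measurableEmbedding _)
      (fun u => (⟪u, w⟫_ℂ).re * ‖Complex.exp ((α : ℂ) * ⟪u, z⟫_ℂ)‖ *
        gaussDensity n (α / 2) u)
  have e2 := ((EuclideanSpace.volume_preserving_symm_measurableEquiv_toLp (Fin (2 * n))).symm).integral_comp
      (MeasurableEquiv.measurableEmbedding _)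
      (fun y => (fun u => (⟪u, w⟫_ℂ).re * ‖Complex.exp ((α : ℂ) * ⟪u, z⟫_ℂ)‖ *
        gaussDensity n (α / 2) u) (b.measurableEquiv.symm y))
  rw [← e1, ← e2]
  -- pointwise identification of the integrand as a product
  have hpoint : ∀ x : Fin (2 * n) → ℝ,
      (fun y => (fun u => (⟪u, w⟫_ℂ).re * ‖Complex.exp ((α : ℂ) * ⟪u, z⟫_ℂ)‖ *
        gaussDensity n (α / 2) u) (b.measurableEquiv.symm y))
        ((MeasurableEquiv.toLp 2 (Fin (2 * n) → ℝ)).symm.symm x)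
      = ∏ i, ((if i = 0 then x i * Real.exp (α * t * x i) else 1) *
          (Real.sqrt (α / (2 * Real.pi)) * Real.exp (-(α / 2) * (x i) ^ 2))) := by
    intro x
    set y : EuclideanSpace ℝ (Fin (2 * n)) :=
      MeasurableEquiv.toLp 2 (Fin (2 * n) → ℝ) x with hy
    set u : EuclideanSpace ℂ (Fin n) := b.measurableEquiv.symm y with hu
    have hyi : ∀ i, y i = x i := fun i => rfl
    have hrepr : b.repr u = y := b.repr.apply_symm_apply y
    have hre : (⟪u, w⟫_ℂ).re = x 0 := by
      rw [← aux_re_inner u w, real_inner_comm, ← hb0, ← b.repr_apply_apply u 0, hrepr, hyi 0]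
    have hinnerz : ⟪u, z⟫_ℂ = (t : ℂ) * ⟪u, w⟫_ℂ := by
      rw [hz, RCLike.real_smul_eq_coe_smul (K := ℂ), inner_smul_right]
      norm_num
    have hnorm : ‖Complex.exp ((α : ℂ) * ⟪u, z⟫_ℂ)‖ = Real.exp (α * t * x 0) := by
      rw [hinnerz, Complex.norm_exp, ← mul_assoc, ← Complex.ofReal_mul,
        Complex.re_ofReal_mul, hre]
    have hnormu : ‖u‖ ^ 2 = ∑ i, (x i) ^ 2 := by
      have h1 : ‖u‖ = ‖y‖ := b.repr.symm.norm_map y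
      rw [h1, EuclideanSpace.norm_eq, Real.sq_sqrt (by positivity)]
      refine Finset.sum_congr rfl fun i _ => ?_
      rw [hyi i, Real.norm_eq_abs, sq_abs]
    show (⟪u, w⟫_ℂ).re * ‖Complex.exp ((α : ℂ) * ⟪u, z⟫_ℂ)‖ * gaussDensity n (α / 2) u = _
    rw [hre, hnorm, gaussDensity, hnormu]
    rw [Finset.prod_mul_distrib, Finset.prod_ite_eq' Finset.univ (0 : Fin (2 * n))
      (fun i => x i * Real.exp (α * t * x i)), if_pos (Finset.mem_univ _),
      Finset.prod_mul_distrib, Finset.prod_const, Finset.card_univ, Fintype.card_fin,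
      ← Real.exp_sum]
    have hc : Real.sqrt (α / (2 * Real.pi)) ^ (2 * n) = (α / 2 / Real.pi) ^ n := by
      rw [pow_mul, Real.sq_sqrt (by positivity), div_div]
    have hs : ∑ i, -(α / 2) * (x i) ^ 2 = -(α / 2) * ∑ i, (x i) ^ 2 := by
      rw [Finset.mul_sum]
    rw [hc, hs]
  simp_rw [hpoint]
  rw [MeasureTheory.integral_fintype_prod_volume_eq_prod (ι := Fin (2 * n))
    (fun i s => (if i = 0 then s * Real.exp (α * t * s) else 1) *
      (Real.sqrt (α / (2 * Real.pi)) * Real.exp (-(α / 2) * s ^ 2)))]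
  have hint : ∀ i : Fin (2 * n),
      (∫ s : ℝ, (if i = 0 then s * Real.exp (α * t * s) else 1) *
        (Real.sqrt (α / (2 * Real.pi)) * Real.exp (-(α / 2) * s ^ 2)))
      = if i = 0 then t * Real.exp (α * t ^ 2 / 2) else 1 := by
    intro i
    by_cases hi : i = 0
    · simp only [hi, if_pos rfl]
      exact aux_main1d α t hα
    · simp only [if_neg hi, one_mul]
      exact aux_gauss_one α hα
  rw [Finset.prod_congr rfl (fun i _ => hint i),
    Finset.prod_ite_eq' Finset.univ (0 : Fin (2 * n))
      (fun _ => t * Real.exp (α * t ^ 2 / 2)), if_pos (Finset.mem_univ _)]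
end

section
/- If f ∈ F^∞_α, then |f(z) − f(w)| ≤ 2ⁿ ‖f‖_{∞,α} d_α(z,w) for all z, w ∈ ℂⁿ, where d_α(z,w) = ∫_{ℂⁿ} |e^{α z·ū} − e^{α w·ū}| dλ_{α/2}(u). -/
open MeasureTheory
open scoped InnerProductSpace

/- ### Auxiliary material -/

section Aux

open Complex Real

local notation "E" n => EuclideanSpace ℂ (Fin n)

noncomputable instance euclideanMeas (n : ℕ) : MeasurableSpace (EuclideanSpace ℂ (Fin n)) := borel _

instance euclideanBorel (n : ℕ) : BorelSpace (EuclideanSpace ℂ (Fin n)) := ⟨rfl⟩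

variable {n : ℕ}

lemma finrank_E : Module.finrank ℝ (E n) = 2 * n := by
  rw [← Module.finrank_mul_finrank ℝ ℂ (E n)]
  simp [Complex.finrank_real_complex, finrank_euclideanSpace]

/-- The Gaussian integral over `ℂⁿ`. -/
lemma gauss_integral {b : ℝ} (hb : 0 < b) :
    ∫ v : E n, Real.exp (-b * ‖v‖ ^ 2) = (Real.pi / b) ^ n := by
  rw [GaussianFourier.integral_rexp_neg_mul_sq_norm hb, finrank_E,
    show ((2 * n : ℕ) / 2 : ℝ) = (n : ℝ) by push_cast; ring, Real.rpow_natCast]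

lemma gauss_integrable {b : ℝ} (hb : 0 < b) (a : ℝ) :
    Integrable (fun v : E n => Real.exp (a * ‖v‖) * Real.exp (-b * ‖v‖ ^ 2)) := by
  have base : Integrable (fun v : E n => Real.exp (-(b / 2) * ‖v‖ ^ 2)) := by
    have := GaussianFourier.integrable_cexp_neg_mul_sq_norm_add
      (V := E n) (b := ((b / 2 : ℝ) : ℂ)) (by simpa using half_pos hb) 0 0
    simp only [zero_mul, add_zero] at this
    have h2 := this.norm
    simpa [Complex.norm_exp, ← Complex.ofReal_pow] using h2
  refine ((base.const_mul (Real.exp (a ^ 2 / (2 * b)))).mono' ?_ ?_)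
  · exact (((Real.continuous_exp.comp (continuous_norm.const_smul a)).mul
      (Real.continuous_exp.comp ((continuous_norm.pow 2).const_smul (-b))))).aestronglyMeasurable
  · refine Filter.Eventually.of_forall fun v => ?_
    rw [Real.norm_of_nonneg (by positivity), ← Real.exp_add, ← Real.exp_add]
    apply Real.exp_le_exp.2
    have h2 : (a * ‖v‖ + -b * ‖v‖ ^ 2) - (-(b / 2) * ‖v‖ ^ 2) ≤ a ^ 2 / (2 * b) := by
      rw [le_div_iff₀ (by positivity)]
      nlinarith [sq_nonneg (a - b * ‖v‖)]
    linarith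

/-- Scalar multiplication by a unit complex number, as a real linear isometry
equivalence of `ℂⁿ`. -/
noncomputable def rotE (n : ℕ) (c : ℂ) (hc : c ≠ 0) (hc1 : ‖c‖ = 1) :
    (E n) ≃ₗᵢ[ℝ] (E n) :=
  { toLinearEquiv := (LinearEquiv.smulOfNeZero ℂ (E n) c hc).restrictScalars ℝ
    norm_map' := fun v => by
      show ‖c • v‖ = ‖v‖
      rw [norm_smul, hc1, one_mul] }

lemma rot_integral (c : ℂ) (hc1 : ‖c‖ = 1) (F : (E n) → ℂ) :
    ∫ v : E n, F (c • v) = ∫ v : E n, F v := by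
  have hc : c ≠ 0 := by intro h; simp [h] at hc1
  exact ((rotE n c hc hc1).measurePreserving).integral_comp
    (rotE n c hc hc1).toHomeomorph.measurableEmbedding F

/-- Mean value property over the unit circle for entire functions. -/
lemma circle_mv (h : ℂ → ℂ) (hh : Differentiable ℂ h) :
    ∫ θ in (0 : ℝ)..(2 * Real.pi), h (Complex.exp (θ * Complex.I))
      = 2 * Real.pi * h 0 := by
  have key := (hh.diffContOnCl (s := Metric.ball (0 : ℂ) 1)).circleIntegral_sub_inv_smul
    (w := 0) (by simp)
  rw [circleIntegral] at key
  have h1 : ∀ θ : ℝ, deriv (circleMap 0 1) θ • ((circleMap 0 1 θ - 0)⁻¹ • h (circleMap 0 1 θ))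
      = Complex.I * h (Complex.exp (θ * Complex.I)) := by
    intro θ
    simp only [deriv_circleMap, circleMap, smul_eq_mul, sub_zero, zero_add, one_mul,
      Complex.ofReal_one]
    field_simp [Complex.exp_ne_zero]
  simp only [h1] at key
  rw [intervalIntegral.integral_const_mul] at key
  have h2 : Complex.I * (∫ θ in (0 : ℝ)..(2 * Real.pi), h (Complex.exp (θ * Complex.I)))
      = Complex.I * (2 * Real.pi * h 0) := by
    rw [key, smul_eq_mul]; ring
  exact mul_left_cancel₀ Complex.I_ne_zero h2


lemma mean_value {α : ℝ} (hα : 0 < α) (g : (E n) → ℂ) (hg : Differentiable ℂ g)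
    (C a : ℝ) (hbd : ∀ v : E n, ‖g v‖ ≤ C * Real.exp (a * ‖v‖ + (α / 2) * ‖v‖ ^ 2)) :
    ∫ v : E n, g v * (Real.exp (-α * ‖v‖ ^ 2) : ℂ)
      = ((Real.pi / α) ^ n : ℝ) * g 0 := by
  have hdom : ∀ v : E n, ‖g v‖ * Real.exp (-α * ‖v‖ ^ 2)
      ≤ C * (Real.exp (a * ‖v‖) * Real.exp (-(α / 2) * ‖v‖ ^ 2)) := by
    intro v
    calc ‖g v‖ * Real.exp (-α * ‖v‖ ^ 2)
        ≤ (C * Real.exp (a * ‖v‖ + (α / 2) * ‖v‖ ^ 2)) * Real.exp (-α * ‖v‖ ^ 2) := by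
          gcongr; exact hbd v
      _ = C * (Real.exp (a * ‖v‖) * Real.exp (-(α / 2) * ‖v‖ ^ 2)) := by
          rw [mul_assoc, ← Real.exp_add, ← Real.exp_add]; congr 2; ring
  have hnorm1 : ∀ θ : ℝ, ‖Complex.exp ((θ : ℂ) * Complex.I)‖ = 1 := fun θ => by
    simpa using Complex.abs_exp_ofReal_mul_I θ
  set μ := volume.restrict (Set.Ioc (0 : ℝ) (2 * Real.pi)) with hμ
  have hΦint : Integrable
      (Function.uncurry fun (θ : ℝ) (v : E n) =>
        g (Complex.exp ((θ : ℂ) * Complex.I) • v) * (Real.exp (-α * ‖v‖ ^ 2) : ℂ))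
      (μ.prod volume) := by
    have hG : Integrable (fun p : ℝ × (E n) =>
        (1 : ℝ) * (C * (Real.exp (a * ‖p.2‖) * Real.exp (-(α / 2) * ‖p.2‖ ^ 2))))
        (μ.prod volume) := by
      exact Integrable.mul_prod (f := fun _ : ℝ => (1 : ℝ))
        (g := fun v : E n => C * (Real.exp (a * ‖v‖) * Real.exp (-(α / 2) * ‖v‖ ^ 2)))
        (integrableOn_const measure_Ioc_lt_top.ne)
        ((gauss_integrable (half_pos hα) a).const_mul C)
    refine hG.mono' ?_ ?_
    · apply Continuous.aestronglyMeasurable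
      have hgc := hg.continuous
      fun_prop
    · refine Filter.Eventually.of_forall fun p => ?_
      have h2 := hdom (Complex.exp ((p.1 : ℂ) * Complex.I) • p.2)
      rw [norm_smul, hnorm1, one_mul] at h2
      have h1 : ‖Function.uncurry (fun (θ : ℝ) (v : E n) =>
          g (Complex.exp ((θ : ℂ) * Complex.I) • v) * (Real.exp (-α * ‖v‖ ^ 2) : ℂ)) p‖
          = ‖g (Complex.exp ((p.1 : ℂ) * Complex.I) • p.2)‖ * Real.exp (-α * ‖p.2‖ ^ 2) := by
        rw [Function.uncurry_apply_pair, norm_mul, Complex.norm_real,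
          Real.norm_of_nonneg (Real.exp_pos _).le]
      rw [h1, one_mul]
      exact h2
  have swap := MeasureTheory.integral_integral_swap
    (f := fun (θ : ℝ) (v : E n) =>
      g (Complex.exp ((θ : ℂ) * Complex.I) • v) * (Real.exp (-α * ‖v‖ ^ 2) : ℂ)) hΦint
  have hrot : ∀ θ : ℝ,
      (∫ v : E n, g (Complex.exp ((θ : ℂ) * Complex.I) • v) * (Real.exp (-α * ‖v‖ ^ 2) : ℂ))
        = ∫ v : E n, g v * (Real.exp (-α * ‖v‖ ^ 2) : ℂ) := by
    intro θ
    have h3 := rot_integral (Complex.exp ((θ : ℂ) * Complex.I)) (hnorm1 θ)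
      (fun v => g v * (Real.exp (-α * ‖v‖ ^ 2) : ℂ))
    simp only [norm_smul, hnorm1, one_mul] at h3
    exact h3
  have hL : (∫ (θ : ℝ), (∫ v : E n,
        g (Complex.exp ((θ : ℂ) * Complex.I) • v) * (Real.exp (-α * ‖v‖ ^ 2) : ℂ)) ∂μ)
      = ((2 * Real.pi : ℝ) : ℂ) * ∫ v : E n, g v * (Real.exp (-α * ‖v‖ ^ 2) : ℂ) := by
    simp only [hrot]
    rw [integral_const, hμ, measureReal_restrict_apply_univ, Real.volume_real_Ioc]
    rw [sub_zero, max_eq_left Real.two_pi_pos.le, Complex.real_smul]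
  have hcirc : ∀ v : E n,
      (∫ θ in Set.Ioc (0 : ℝ) (2 * Real.pi), g (Complex.exp ((θ : ℂ) * Complex.I) • v))
        = 2 * Real.pi * g 0 := by
    intro v
    have hd : Differentiable ℂ (fun t : ℂ => g (t • v)) :=
      hg.comp (differentiable_id.smul_const v)
    have h4 := circle_mv (fun t => g (t • v)) hd
    rw [intervalIntegral.integral_of_le (by positivity)] at h4
    simpa using h4
  have hR : (∫ v : E n, (∫ (θ : ℝ),
        g (Complex.exp ((θ : ℂ) * Complex.I) • v) * (Real.exp (-α * ‖v‖ ^ 2) : ℂ) ∂μ))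
      = ((2 * Real.pi : ℝ) : ℂ) * (((Real.pi / α) ^ n : ℝ) * g 0) := by
    have : ∀ v : E n, (∫ (θ : ℝ),
        g (Complex.exp ((θ : ℂ) * Complex.I) • v) * (Real.exp (-α * ‖v‖ ^ 2) : ℂ) ∂μ)
        = (2 * Real.pi * g 0) * (Real.exp (-α * ‖v‖ ^ 2) : ℂ) := by
      intro v
      rw [integral_mul_const, hμ, hcirc v]
    simp only [this]
    rw [integral_const_mul,
      show (∫ v : E n, ((Real.exp (-α * ‖v‖ ^ 2) : ℝ) : ℂ))
          = (((Real.pi / α) ^ n : ℝ) : ℂ) from by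
        rw [← gauss_integral hα]; exact integral_ofReal]
    push_cast
    ring
  have h5 := (hL.symm.trans swap).trans hR
  have h2pi : ((2 * Real.pi : ℝ) : ℂ) ≠ 0 := by
    exact_mod_cast Real.two_pi_pos.ne'
  exact mul_left_cancel₀ h2pi h5


lemma reproducing {α : ℝ} (hα : 0 < α) (f : (E n) → ℂ) (hf : Differentiable ℂ f)
    (M : ℝ) (hM : ∀ u : E n, ‖f u‖ ≤ M * Real.exp ((α / 2) * ‖u‖ ^ 2)) (z : E n) :
    ∫ u : E n, Complex.exp ((α : ℂ) * ⟪u, z⟫_ℂ) * f u * (Real.exp (-α * ‖u‖ ^ 2) : ℝ)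
      = ((Real.pi / α) ^ n : ℝ) * f z := by
  have hM0 : 0 ≤ M := by
    have h0 := (norm_nonneg (f 0)).trans (hM 0)
    nlinarith [Real.exp_pos ((α / 2) * ‖(0 : E n)‖ ^ 2)]
  have key : ∀ v : E n,
      Complex.exp ((α : ℂ) * ⟪v + z, z⟫_ℂ) * ((Real.exp (-α * ‖v + z‖ ^ 2) : ℝ) : ℂ)
      = Complex.exp (-(α : ℂ) * ⟪z, v⟫_ℂ) * ((Real.exp (-α * ‖v‖ ^ 2) : ℝ) : ℂ) := by
    intro v
    have h1 : ⟪v + z, z⟫_ℂ = ⟪v, z⟫_ℂ + ((‖z‖ : ℂ)) ^ 2 := by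
      rw [inner_add_left, inner_self_eq_norm_sq_to_K]; norm_cast
    have h2 : (‖v + z‖ : ℝ) ^ 2 = ‖v‖ ^ 2 + 2 * Complex.re ⟪v, z⟫_ℂ + ‖z‖ ^ 2 :=
      norm_add_sq (𝕜 := ℂ) v z
    have h3 : ⟪z, v⟫_ℂ = (starRingEnd ℂ) ⟪v, z⟫_ℂ := by rw [inner_conj_symm]
    have h2' : ((‖v + z‖ ^ 2 : ℝ) : ℂ) = ((‖v‖ ^ 2 + 2 * (⟪v, z⟫_ℂ).re + ‖z‖ ^ 2 : ℝ) : ℂ) := by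
      exact_mod_cast congrArg Complex.ofReal h2
    have h4 : (α : ℂ) * ⟪v + z, z⟫_ℂ + ((-α * ‖v + z‖ ^ 2 : ℝ) : ℂ)
        = -(α : ℂ) * ⟪z, v⟫_ℂ + ((-α * ‖v‖ ^ 2 : ℝ) : ℂ) := by
      rw [h1, h3]
      have hac : ⟪v, z⟫_ℂ + (starRingEnd ℂ) ⟪v, z⟫_ℂ = 2 * ((Complex.re ⟪v, z⟫_ℂ : ℝ) : ℂ) := by
        rw [Complex.add_conj]; push_cast; ring
      push_cast at h2' ⊢
      linear_combination (-(α : ℂ)) * h2' + (α : ℂ) * hac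
    rw [Complex.ofReal_exp, Complex.ofReal_exp, ← Complex.exp_add, ← Complex.exp_add, h4]
  set g : (E n) → ℂ := fun v => f (v + z) * Complex.exp (-(α : ℂ) * ⟪z, v⟫_ℂ) with hg
  have hgd : Differentiable ℂ g := by
    apply Differentiable.mul
    · exact hf.comp (differentiable_id.add_const z)
    · exact Differentiable.cexp (((innerSL ℂ z).differentiable).const_mul (-(α : ℂ)))
  have hbd : ∀ v : E n, ‖g v‖
      ≤ (M * Real.exp ((α / 2) * ‖z‖ ^ 2)) * Real.exp ((2 * α * ‖z‖) * ‖v‖ + (α / 2) * ‖v‖ ^ 2) := by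
    intro v
    have hn2 : ‖v + z‖ ^ 2 ≤ (‖v‖ + ‖z‖) ^ 2 := by
      have hn := norm_add_le v z
      nlinarith [norm_nonneg (v + z)]
    have e2 : ‖Complex.exp (-(α : ℂ) * ⟪z, v⟫_ℂ)‖ ≤ Real.exp (α * ‖z‖ * ‖v‖) := by
      rw [Complex.norm_exp]
      apply Real.exp_le_exp.2
      have hre : (-(α : ℂ) * ⟪z, v⟫_ℂ).re = -α * (⟪z, v⟫_ℂ).re := by
        simp [Complex.mul_re]
      rw [hre]
      have habs : |(⟪z, v⟫_ℂ).re| ≤ ‖z‖ * ‖v‖ := by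
        refine (Complex.abs_re_le_norm _).trans ?_
        exact (norm_inner_le_norm (𝕜 := ℂ) z v)
      nlinarith [hα.le, neg_abs_le ((⟪z, v⟫_ℂ).re),
        mul_le_mul_of_nonneg_left habs hα.le]
    calc ‖g v‖ = ‖f (v + z)‖ * ‖Complex.exp (-(α : ℂ) * ⟪z, v⟫_ℂ)‖ := norm_mul _ _
      _ ≤ (M * Real.exp ((α / 2) * ‖v + z‖ ^ 2)) * Real.exp (α * ‖z‖ * ‖v‖) := by
          apply mul_le_mul (hM (v + z)) e2 (norm_nonneg _) (by positivity)
      _ ≤ (M * Real.exp ((α / 2) * ‖z‖ ^ 2)) * Real.exp ((2 * α * ‖z‖) * ‖v‖ + (α / 2) * ‖v‖ ^ 2) := by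
          rw [mul_assoc M, mul_assoc M, ← Real.exp_add, ← Real.exp_add]
          exact mul_le_mul_of_nonneg_left (Real.exp_le_exp.2 (by
            nlinarith [hα.le, mul_le_mul_of_nonneg_left hn2
              (by positivity : (0 : ℝ) ≤ α / 2)])) hM0
  have hmv := mean_value hα g hgd (M * Real.exp ((α / 2) * ‖z‖ ^ 2)) (2 * α * ‖z‖) hbd
  have hg0 : g 0 = f z := by
    simp [hg]
  calc ∫ u : E n, Complex.exp ((α : ℂ) * ⟪u, z⟫_ℂ) * f u * (Real.exp (-α * ‖u‖ ^ 2) : ℝ)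
      = ∫ v : E n,
        Complex.exp ((α : ℂ) * ⟪v + z, z⟫_ℂ) * f (v + z) * (Real.exp (-α * ‖v + z‖ ^ 2) : ℝ) :=
        (integral_add_right_eq_self (fun u : E n =>
          Complex.exp ((α : ℂ) * ⟪u, z⟫_ℂ) * f u * (Real.exp (-α * ‖u‖ ^ 2) : ℝ)) z).symm
    _ = ∫ v : E n, g v * (Real.exp (-α * ‖v‖ ^ 2) : ℝ) := by
        refine integral_congr_ae (Filter.Eventually.of_forall fun v => ?_)
        linear_combination f (v + z) * key v
    _ = ((Real.pi / α) ^ n : ℝ) * g 0 := hmv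
    _ = ((Real.pi / α) ^ n : ℝ) * f z := by rw [hg0]


lemma exp_inner_norm_le {α : ℝ} (hα : 0 ≤ α) (u y : E n) :
    ‖Complex.exp ((α : ℂ) * ⟪u, y⟫_ℂ)‖ ≤ Real.exp (α * ‖y‖ * ‖u‖) := by
  rw [Complex.norm_exp]
  apply Real.exp_le_exp.2
  have hre : ((α : ℂ) * ⟪u, y⟫_ℂ).re = α * Complex.re ⟪u, y⟫_ℂ := by
    simp [Complex.mul_re]
  rw [hre]
  have habs : |Complex.re ⟪u, y⟫_ℂ| ≤ ‖u‖ * ‖y‖ :=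
    (Complex.abs_re_le_norm _).trans (norm_inner_le_norm (𝕜 := ℂ) u y)
  nlinarith [le_abs_self (Complex.re ⟪u, y⟫_ℂ), mul_le_mul_of_nonneg_left habs hα]

end Aux

theorem stmt8 (n : ℕ) (α : ℝ) (hα : 0 < α) (f : EuclideanSpace ℂ (Fin n) → ℂ)
    (hf : Differentiable ℂ f)
    (hb : BddAbove (Set.range fun z => ‖f z‖ * Real.exp (-α * ‖z‖ ^ 2 / 2))) :
    ∀ z w : EuclideanSpace ℂ (Fin n),
      ‖f z - f w‖ ≤
        2 ^ n * (⨆ u, ‖f u‖ * Real.exp (-α * ‖u‖ ^ 2 / 2)) *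
          dAB n (α / 2) α z w := by
  intro z w
  set M : ℝ := ⨆ u, ‖f u‖ * Real.exp (-α * ‖u‖ ^ 2 / 2) with hMdef
  have hM : ∀ u : EuclideanSpace ℂ (Fin n), ‖f u‖ ≤ M * Real.exp ((α / 2) * ‖u‖ ^ 2) := by
    intro u
    have h1 : ‖f u‖ * Real.exp (-α * ‖u‖ ^ 2 / 2) ≤ M := le_ciSup hb u
    have h2 : Real.exp (-α * ‖u‖ ^ 2 / 2) * Real.exp ((α / 2) * ‖u‖ ^ 2) = 1 := by
      rw [← Real.exp_add, show -α * ‖u‖ ^ 2 / 2 + (α / 2) * ‖u‖ ^ 2 = 0 by ring, Real.exp_zero]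
    calc ‖f u‖ = (‖f u‖ * Real.exp (-α * ‖u‖ ^ 2 / 2)) * Real.exp ((α / 2) * ‖u‖ ^ 2) := by
          rw [mul_assoc, h2, mul_one]
      _ ≤ M * Real.exp ((α / 2) * ‖u‖ ^ 2) :=
          mul_le_mul_of_nonneg_right h1 (Real.exp_pos _).le
  have hM0 : 0 ≤ M :=
    (mul_nonneg (norm_nonneg _) (Real.exp_pos _).le).trans (le_ciSup hb 0)
  have hIint : ∀ y : EuclideanSpace ℂ (Fin n),
      Integrable (fun u : EuclideanSpace ℂ (Fin n) =>
        Complex.exp ((α : ℂ) * ⟪u, y⟫_ℂ) * f u * (Real.exp (-α * ‖u‖ ^ 2) : ℝ)) := by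
    intro y
    refine ((gauss_integrable (half_pos hα) (α * ‖y‖)).const_mul M).mono' ?_ ?_
    · apply Continuous.aestronglyMeasurable
      exact ((Complex.continuous_exp.comp
          (continuous_const.mul (continuous_id.inner continuous_const))).mul
        hf.continuous).mul
        (Complex.continuous_ofReal.comp (Real.continuous_exp.comp (by continuity)))
    · refine Filter.Eventually.of_forall fun u => ?_
      have hnorm : ‖Complex.exp ((α : ℂ) * ⟪u, y⟫_ℂ) * f u * ((Real.exp (-α * ‖u‖ ^ 2) : ℝ) : ℂ)‖
          = ‖Complex.exp ((α : ℂ) * ⟪u, y⟫_ℂ)‖ * ‖f u‖ * Real.exp (-α * ‖u‖ ^ 2) := by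
        rw [norm_mul, norm_mul, Complex.norm_real, Real.norm_of_nonneg (Real.exp_pos _).le]
      rw [hnorm]
      have h9 : Real.exp (α * ‖y‖ * ‖u‖) * Real.exp (-(α / 2) * ‖u‖ ^ 2)
          = Real.exp (α * ‖y‖ * ‖u‖) * Real.exp ((α / 2) * ‖u‖ ^ 2) * Real.exp (-α * ‖u‖ ^ 2) := by
        simp only [← Real.exp_add]; congr 1; ring
      calc ‖Complex.exp ((α : ℂ) * ⟪u, y⟫_ℂ)‖ * ‖f u‖ * Real.exp (-α * ‖u‖ ^ 2)
          ≤ Real.exp (α * ‖y‖ * ‖u‖) * (M * Real.exp ((α / 2) * ‖u‖ ^ 2))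
            * Real.exp (-α * ‖u‖ ^ 2) :=
            mul_le_mul_of_nonneg_right
              (mul_le_mul (exp_inner_norm_le hα.le u y) (hM u) (norm_nonneg _)
                (Real.exp_pos _).le) (Real.exp_pos _).le
        _ = M * (Real.exp (α * ‖y‖ * ‖u‖) * Real.exp (-(α / 2) * ‖u‖ ^ 2)) := by
            rw [h9]; ring
  have hz := reproducing hα f hf M hM z
  have hw := reproducing hα f hf M hM w
  have hc1C : ((((α / Real.pi) ^ n : ℝ)) : ℂ) * ((((Real.pi / α) ^ n : ℝ)) : ℂ) = 1 := by
    have : (α / Real.pi) * (Real.pi / α) = 1 := by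
      field_simp
    push_cast
    rw [← mul_pow]
    exact_mod_cast by rw [this, one_pow]
  have hsub : f z - f w = (((α / Real.pi) ^ n : ℝ) : ℂ) *
      ∫ u : EuclideanSpace ℂ (Fin n),
        (Complex.exp ((α : ℂ) * ⟪u, z⟫_ℂ) * f u * (Real.exp (-α * ‖u‖ ^ 2) : ℝ)
          - Complex.exp ((α : ℂ) * ⟪u, w⟫_ℂ) * f u * (Real.exp (-α * ‖u‖ ^ 2) : ℝ)) := by
    rw [integral_sub (hIint z) (hIint w), hz, hw]
    linear_combination (f w - f z) * hc1C
  have hInt2 : Integrable (fun u : EuclideanSpace ℂ (Fin n) =>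
      M * (‖Complex.exp ((α : ℂ) * ⟪u, z⟫_ℂ) - Complex.exp ((α : ℂ) * ⟪u, w⟫_ℂ)‖
        * Real.exp (-(α / 2) * ‖u‖ ^ 2))) := by
    refine (((gauss_integrable (half_pos hα) (α * ‖z‖)).add
      (gauss_integrable (half_pos hα) (α * ‖w‖))).const_mul M).mono' ?_ ?_
    · apply Continuous.aestronglyMeasurable
      apply continuous_const.mul
      apply Continuous.mul
      · apply Continuous.norm
        exact (Complex.continuous_exp.comp
            (continuous_const.mul (continuous_id.inner continuous_const))).sub
          (Complex.continuous_exp.comp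
            (continuous_const.mul (continuous_id.inner continuous_const)))
      · exact Real.continuous_exp.comp (by continuity)
    · refine Filter.Eventually.of_forall fun u => ?_
      have hd : ‖Complex.exp ((α : ℂ) * ⟪u, z⟫_ℂ) - Complex.exp ((α : ℂ) * ⟪u, w⟫_ℂ)‖
          ≤ Real.exp (α * ‖z‖ * ‖u‖) + Real.exp (α * ‖w‖ * ‖u‖) :=
        (norm_sub_le _ _).trans
          (add_le_add (exp_inner_norm_le hα.le u z) (exp_inner_norm_le hα.le u w))
      have hb1 : (0 : ℝ) ≤ ‖Complex.exp ((α : ℂ) * ⟪u, z⟫_ℂ)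
          - Complex.exp ((α : ℂ) * ⟪u, w⟫_ℂ)‖ * Real.exp (-(α / 2) * ‖u‖ ^ 2) := by positivity
      rw [Real.norm_of_nonneg (mul_nonneg hM0 hb1)]
      calc M * (‖Complex.exp ((α : ℂ) * ⟪u, z⟫_ℂ) - Complex.exp ((α : ℂ) * ⟪u, w⟫_ℂ)‖
            * Real.exp (-(α / 2) * ‖u‖ ^ 2))
          ≤ M * ((Real.exp (α * ‖z‖ * ‖u‖) + Real.exp (α * ‖w‖ * ‖u‖))
            * Real.exp (-(α / 2) * ‖u‖ ^ 2)) := by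
            apply mul_le_mul_of_nonneg_left _ hM0
            exact mul_le_mul_of_nonneg_right hd (Real.exp_pos _).le
        _ = M * (Real.exp (α * ‖z‖ * ‖u‖) * Real.exp (-(α / 2) * ‖u‖ ^ 2)
            + Real.exp (α * ‖w‖ * ‖u‖) * Real.exp (-(α / 2) * ‖u‖ ^ 2)) := by ring
  have hmono : (∫ u : EuclideanSpace ℂ (Fin n),
      ‖Complex.exp ((α : ℂ) * ⟪u, z⟫_ℂ) * f u * (Real.exp (-α * ‖u‖ ^ 2) : ℝ)
        - Complex.exp ((α : ℂ) * ⟪u, w⟫_ℂ) * f u * (Real.exp (-α * ‖u‖ ^ 2) : ℝ)‖)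
      ≤ ∫ u : EuclideanSpace ℂ (Fin n),
        M * (‖Complex.exp ((α : ℂ) * ⟪u, z⟫_ℂ) - Complex.exp ((α : ℂ) * ⟪u, w⟫_ℂ)‖
          * Real.exp (-(α / 2) * ‖u‖ ^ 2)) := by
    apply integral_mono ((hIint z).sub (hIint w)).norm hInt2
    intro u
    have hfac : Complex.exp ((α : ℂ) * ⟪u, z⟫_ℂ) * f u * ((Real.exp (-α * ‖u‖ ^ 2) : ℝ) : ℂ)
        - Complex.exp ((α : ℂ) * ⟪u, w⟫_ℂ) * f u * ((Real.exp (-α * ‖u‖ ^ 2) : ℝ) : ℂ)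
        = (Complex.exp ((α : ℂ) * ⟪u, z⟫_ℂ) - Complex.exp ((α : ℂ) * ⟪u, w⟫_ℂ)) * f u
          * ((Real.exp (-α * ‖u‖ ^ 2) : ℝ) : ℂ) := by ring
    have h9 : Real.exp ((α / 2) * ‖u‖ ^ 2) * Real.exp (-α * ‖u‖ ^ 2)
        = Real.exp (-(α / 2) * ‖u‖ ^ 2) := by
      rw [← Real.exp_add]; congr 1; ring
    simp only [Pi.sub_apply, hfac]
    rw [norm_mul, norm_mul, Complex.norm_real, Real.norm_of_nonneg (Real.exp_pos _).le]
    calc ‖Complex.exp ((α : ℂ) * ⟪u, z⟫_ℂ) - Complex.exp ((α : ℂ) * ⟪u, w⟫_ℂ)‖ * ‖f u‖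
          * Real.exp (-α * ‖u‖ ^ 2)
        ≤ ‖Complex.exp ((α : ℂ) * ⟪u, z⟫_ℂ) - Complex.exp ((α : ℂ) * ⟪u, w⟫_ℂ)‖
          * (M * Real.exp ((α / 2) * ‖u‖ ^ 2)) * Real.exp (-α * ‖u‖ ^ 2) := by
          apply mul_le_mul_of_nonneg_right _ (Real.exp_pos _).le
          exact mul_le_mul_of_nonneg_left (hM u) (norm_nonneg _)
      _ = M * (‖Complex.exp ((α : ℂ) * ⟪u, z⟫_ℂ) - Complex.exp ((α : ℂ) * ⟪u, w⟫_ℂ)‖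
          * Real.exp (-(α / 2) * ‖u‖ ^ 2)) := by
          rw [← h9]; ring
  have hgauss : (∫ u : EuclideanSpace ℂ (Fin n),
      M * (‖Complex.exp ((α : ℂ) * ⟪u, z⟫_ℂ) - Complex.exp ((α : ℂ) * ⟪u, w⟫_ℂ)‖
        * Real.exp (-(α / 2) * ‖u‖ ^ 2)))
      = M * ∫ u : EuclideanSpace ℂ (Fin n),
        (‖Complex.exp ((α : ℂ) * ⟪u, z⟫_ℂ) - Complex.exp ((α : ℂ) * ⟪u, w⟫_ℂ)‖
          * Real.exp (-(α / 2) * ‖u‖ ^ 2)) := integral_const_mul _ _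
  have hdab : dAB n (α / 2) α z w = (α / 2 / Real.pi) ^ n
      * ∫ u : EuclideanSpace ℂ (Fin n),
        (‖Complex.exp ((α : ℂ) * ⟪u, z⟫_ℂ) - Complex.exp ((α : ℂ) * ⟪u, w⟫_ℂ)‖
          * Real.exp (-(α / 2) * ‖u‖ ^ 2)) := by
    rw [dAB, ← integral_const_mul]
    congr 1 with u
    rw [gaussDensity]
    ring
  rw [hsub, norm_mul, Complex.norm_real,
    Real.norm_of_nonneg (by positivity)]
  calc (α / Real.pi) ^ n * ‖∫ u : EuclideanSpace ℂ (Fin n),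
        (Complex.exp ((α : ℂ) * ⟪u, z⟫_ℂ) * f u * (Real.exp (-α * ‖u‖ ^ 2) : ℝ)
          - Complex.exp ((α : ℂ) * ⟪u, w⟫_ℂ) * f u * (Real.exp (-α * ‖u‖ ^ 2) : ℝ))‖
      ≤ (α / Real.pi) ^ n * ∫ u : EuclideanSpace ℂ (Fin n),
        ‖Complex.exp ((α : ℂ) * ⟪u, z⟫_ℂ) * f u * (Real.exp (-α * ‖u‖ ^ 2) : ℝ)
          - Complex.exp ((α : ℂ) * ⟪u, w⟫_ℂ) * f u * (Real.exp (-α * ‖u‖ ^ 2) : ℝ)‖ := by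
        apply mul_le_mul_of_nonneg_left (norm_integral_le_integral_norm _) (by positivity)
    _ ≤ (α / Real.pi) ^ n * ∫ u : EuclideanSpace ℂ (Fin n),
        M * (‖Complex.exp ((α : ℂ) * ⟪u, z⟫_ℂ) - Complex.exp ((α : ℂ) * ⟪u, w⟫_ℂ)‖
          * Real.exp (-(α / 2) * ‖u‖ ^ 2)) := by
        exact mul_le_mul_of_nonneg_left hmono (by positivity)
    _ = 2 ^ n * M * dAB n (α / 2) α z w := by
        rw [hgauss, hdab, show (α / Real.pi) = 2 * (α / 2 / Real.pi) by ring, mul_pow]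
        ring
end

section
/- An entire function f on ℂⁿ belongs to F^∞_α if and only if there exists C > 0 such that |∂f/∂zₖ(z)| ≤ C(1+|z|)e^{α|z|²/2} for all z ∈ ℂⁿ and all 1 ≤ k ≤ n. -/
open Metric Real MeasureTheory


private lemma fwd_aux (n : ℕ) (α : ℝ) (hα : 0 < α) (f : EuclideanSpace ℂ (Fin n) → ℂ)
    (hf : Differentiable ℂ f) (M : ℝ)
    (hM : ∀ z, ‖f z‖ * Real.exp (-α * ‖z‖ ^ 2 / 2) ≤ M) :
    ∃ C > (0 : ℝ), ∀ z : EuclideanSpace ℂ (Fin n), ∀ k : Fin n,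
        ‖fderiv ℂ f z (EuclideanSpace.single k 1)‖ ≤
          C * (1 + ‖z‖) * Real.exp (α * ‖z‖ ^ 2 / 2) := by
  have hM0 : 0 ≤ M := le_trans (by positivity) (hM 0)
  have hMb : ∀ x, ‖f x‖ ≤ M * Real.exp (α * ‖x‖ ^ 2 / 2) := by
    intro x
    have h := hM x
    have he : Real.exp (-α * ‖x‖ ^ 2 / 2) * Real.exp (α * ‖x‖ ^ 2 / 2) = 1 := by
      rw [← Real.exp_add]; ring_nf; exact Real.exp_zero
    calc ‖f x‖
        = ‖f x‖ * Real.exp (-α * ‖x‖ ^ 2 / 2) * Real.exp (α * ‖x‖ ^ 2 / 2) := by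
          rw [mul_assoc, he, mul_one]
      _ ≤ M * Real.exp (α * ‖x‖ ^ 2 / 2) :=
          mul_le_mul_of_nonneg_right h (Real.exp_pos _).le
  refine ⟨(M + 1) * Real.exp (3 * α / 2), by positivity, fun z k => ?_⟩
  set e : EuclideanSpace ℂ (Fin n) := EuclideanSpace.single k 1 with he_def
  have hne : ‖e‖ = 1 := by simp [he_def, EuclideanSpace.norm_single]
  set r : ℝ := 1 / (1 + ‖z‖) with hr_def
  have h1z : (0:ℝ) < 1 + ‖z‖ := by positivity
  have hr : 0 < r := by positivity
  have hr1 : r * (1 + ‖z‖) = 1 := by rw [hr_def]; field_simp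
  set g : ℂ → ℂ := fun w => f (z + w • e) with hg_def
  have hg : Differentiable ℂ g := hf.comp ((differentiable_id.smul_const e).const_add z)
  have hd : HasDerivAt g (fderiv ℂ f z e) 0 := by
    have h1 : HasDerivAt (fun w : ℂ => z + w • e) ((1:ℂ) • e) 0 :=
      ((hasDerivAt_id (0:ℂ)).smul_const e).const_add z
    rw [one_smul] at h1
    have h2 := ((hf (z + (0:ℂ) • e)).hasFDerivAt).comp_hasDerivAt 0 h1
    simp at h2
    exact h2
  have hC : ∀ w ∈ sphere (0:ℂ) r, ‖g w‖ ≤ M * Real.exp (α * (‖z‖ + r) ^ 2 / 2) := by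
    intro w hw
    have hw' : ‖w‖ = r := by simpa using hw
    have hx : ‖z + w • e‖ ≤ ‖z‖ + r := by
      calc ‖z + w • e‖ ≤ ‖z‖ + ‖w • e‖ := norm_add_le _ _
        _ = ‖z‖ + r := by rw [norm_smul, hne, mul_one, hw']
    calc ‖g w‖ = ‖f (z + w • e)‖ := rfl
      _ ≤ M * Real.exp (α * ‖z + w • e‖ ^ 2 / 2) := hMb _
      _ ≤ M * Real.exp (α * (‖z‖ + r) ^ 2 / 2) := by
          gcongr
  have key := Complex.norm_deriv_le_of_forall_mem_sphere_norm_le hr hg.diffContOnCl hC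
  rw [hd.deriv] at key
  have hexp : Real.exp (α * (‖z‖ + r) ^ 2 / 2) ≤ Real.exp (3 * α / 2) * Real.exp (α * ‖z‖ ^ 2 / 2) := by
    rw [← Real.exp_add]
    apply Real.exp_le_exp.2
    have h2 : r ≤ 1 := by nlinarith [norm_nonneg z]
    have h3 : r * ‖z‖ ≤ 1 := by nlinarith [norm_nonneg z, hr.le]
    have h4 : (‖z‖ + r) ^ 2 ≤ ‖z‖ ^ 2 + 3 := by nlinarith [hr.le]
    nlinarith [mul_le_mul_of_nonneg_left h4 hα.le]
  have hdiv : M * Real.exp (α * (‖z‖ + r) ^ 2 / 2) / r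
      = M * Real.exp (α * (‖z‖ + r) ^ 2 / 2) * (1 + ‖z‖) := by
    rw [hr_def]; field_simp
  calc ‖fderiv ℂ f z e‖ = ‖fderiv ℂ f z e‖ := rfl
    _ ≤ M * Real.exp (α * (‖z‖ + r) ^ 2 / 2) / r := key
    _ = M * Real.exp (α * (‖z‖ + r) ^ 2 / 2) * (1 + ‖z‖) := hdiv
    _ ≤ M * (Real.exp (3 * α / 2) * Real.exp (α * ‖z‖ ^ 2 / 2)) * (1 + ‖z‖) := by
        gcongr
    _ = M * Real.exp (3 * α / 2) * (1 + ‖z‖) * Real.exp (α * ‖z‖ ^ 2 / 2) := by ring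
    _ ≤ (M + 1) * Real.exp (3 * α / 2) * (1 + ‖z‖) * Real.exp (α * ‖z‖ ^ 2 / 2) := by
        gcongr
        linarith

private lemma coord_le_norm (n : ℕ) (v : EuclideanSpace ℂ (Fin n)) (k : Fin n) :
    ‖v k‖ ≤ ‖v‖ := by
  rw [EuclideanSpace.norm_eq]
  rw [show ‖v k‖ = ‖v k‖ from rfl]
  refine (Real.le_sqrt (norm_nonneg _) (by positivity)).2 ?_
  exact Finset.single_le_sum (f := fun i => ‖v i‖ ^ 2) (fun i _ => by positivity) (Finset.mem_univ k)

private lemma euclid_decomp (n : ℕ) (v : EuclideanSpace ℂ (Fin n)) :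
    v = ∑ k, v k • EuclideanSpace.single k (1:ℂ) := by
  have h := (EuclideanSpace.basisFun (Fin n) ℂ).sum_repr v
  simpa [EuclideanSpace.basisFun_apply, EuclideanSpace.basisFun_repr] using h.symm

private lemma apply_le_sum (n : ℕ) (L : EuclideanSpace ℂ (Fin n) →L[ℂ] ℂ)
    (v : EuclideanSpace ℂ (Fin n)) :
    ‖L v‖ ≤ ∑ k, ‖v k‖ * ‖L (EuclideanSpace.single k 1)‖ := by
  conv_lhs => rw [euclid_decomp n v]
  rw [map_sum]
  refine (norm_sum_le _ _).trans ?_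
  apply Finset.sum_le_sum
  intro k _
  rw [L.map_smul, norm_smul]

private lemma one_sub_exp_neg_le_sqrt (c : ℝ) (hc : 0 ≤ c) : 1 - Real.exp (-c) ≤ Real.sqrt c := by
  rcases le_or_gt c 1 with h | h
  · have h1 : 1 - Real.exp (-c) ≤ c := by linarith [Real.add_one_le_exp (-c)]
    have h2 : c ≤ Real.sqrt c := by
      nlinarith [Real.mul_self_sqrt hc, Real.sqrt_nonneg c,
        (Real.sqrt_le_sqrt h).trans_eq Real.sqrt_one]
    linarith
  · have h1 : (1:ℝ) ≤ Real.sqrt c := by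
      rw [show (1:ℝ) = Real.sqrt 1 from Real.sqrt_one.symm]
      exact Real.sqrt_le_sqrt h.le
    linarith [Real.exp_pos (-c)]

private lemma rev (n : ℕ) (α : ℝ) (hα : 0 < α) (f : EuclideanSpace ℂ (Fin n) → ℂ)
    (hf : Differentiable ℂ f) (C : ℝ) (hC0 : 0 < C)
    (hb : ∀ z : EuclideanSpace ℂ (Fin n), ∀ k : Fin n,
        ‖fderiv ℂ f z (EuclideanSpace.single k 1)‖ ≤
          C * (1 + ‖z‖) * Real.exp (α * ‖z‖ ^ 2 / 2)) :
    ∃ M : ℝ, ∀ z, ‖f z‖ * Real.exp (-α * ‖z‖ ^ 2 / 2) ≤ M := by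
  refine ⟨‖f 0‖ + n * C * (Real.sqrt (2 / α) + 2 / α), fun z => ?_⟩
  rcases eq_or_ne z 0 with rfl | hz
  · simp only [norm_zero]
    have : Real.exp (-α * 0 ^ 2 / 2) = 1 := by norm_num
    rw [this, mul_one]
    have : (0:ℝ) ≤ n * C * (Real.sqrt (2 / α) + 2 / α) := by positivity
    linarith
  -- main case
  set R : ℝ := ‖z‖ with hR_def
  have hR : 0 < R := norm_pos_iff.2 hz
  set c : ℝ := α * R ^ 2 / 2 with hc_def
  have hc : 0 < c := by positivity
  set G : ℂ → ℂ := fun w => f (w • z) with hG_def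
  have hG : Differentiable ℂ G := hf.comp (differentiable_id.smul_const z)
  have hG' : ∀ w : ℂ, HasDerivAt G (fderiv ℂ f (w • z) z) w := by
    intro w
    have h1 : HasDerivAt (fun w : ℂ => w • z) ((1:ℂ) • z) w :=
      (hasDerivAt_id w).smul_const z
    rw [one_smul] at h1
    exact ((hf (w • z)).hasFDerivAt).comp_hasDerivAt w h1
  have hderivG : ∀ w : ℂ, deriv G w = fderiv ℂ f (w • z) z := fun w => (hG' w).deriv
  -- the bound on the derivative along the segment
  set K : ℝ := n * C * (R + R ^ 2) * Real.exp (α * R ^ 2 / 2) with hK_def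
  have hKpos : 0 ≤ K := by positivity
  have hDbound : ∀ t ∈ Set.Icc (0:ℝ) 1, ‖deriv G (t:ℂ)‖ ≤ K * Real.exp (c * t - c) := by
    intro t ht
    obtain ⟨ht0, ht1⟩ := ht
    rw [hderivG]
    have hnorm : ‖(t:ℂ) • z‖ = t * R := by
      rw [norm_smul, Complex.norm_real, Real.norm_eq_abs, abs_of_nonneg ht0]
    refine (apply_le_sum n _ z).trans ?_
    have hsum : ∑ k : Fin n, ‖z k‖ * ‖fderiv ℂ f ((t:ℂ) • z) (EuclideanSpace.single k 1)‖
        ≤ ∑ _k : Fin n, R * (C * (1 + t * R) * Real.exp (α * (t * R) ^ 2 / 2)) := by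
      apply Finset.sum_le_sum
      intro k _
      apply mul_le_mul (coord_le_norm n z k) ?_ (norm_nonneg _) hR.le
      have := hb ((t:ℂ) • z) k
      rwa [hnorm] at this
    refine hsum.trans ?_
    rw [Finset.sum_const, Finset.card_univ, Fintype.card_fin, nsmul_eq_mul]
    have hfac : (n:ℝ) * (R * (C * (1 + t * R) * Real.exp (α * (t * R) ^ 2 / 2)))
        ≤ n * C * (R + R ^ 2) * (Real.exp (α * R ^ 2 / 2) * Real.exp (c * t - c)) := by
      have h1 : R * (1 + t * R) ≤ R + R ^ 2 := by nlinarith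
      have h2 : Real.exp (α * (t * R) ^ 2 / 2) ≤ Real.exp (α * R ^ 2 / 2) * Real.exp (c * t - c) := by
        rw [← Real.exp_add]
        apply Real.exp_le_exp.2
        rw [hc_def]
        nlinarith [sq_nonneg R, mul_nonneg (mul_nonneg hα.le (sq_nonneg R)) (sub_nonneg.2 (by nlinarith : t ^ 2 ≤ t))]
      calc (n:ℝ) * (R * (C * (1 + t * R) * Real.exp (α * (t * R) ^ 2 / 2)))
          = (n * C) * ((R * (1 + t * R)) * Real.exp (α * (t * R) ^ 2 / 2)) := by ring
        _ ≤ (n * C) * ((R + R ^ 2) * (Real.exp (α * R ^ 2 / 2) * Real.exp (c * t - c))) := by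
            apply mul_le_mul_of_nonneg_left ?_ (by positivity)
            apply mul_le_mul h1 h2 (by positivity) (by positivity)
        _ = n * C * (R + R ^ 2) * (Real.exp (α * R ^ 2 / 2) * Real.exp (c * t - c)) := by ring
    calc (n:ℝ) * (R * (C * (1 + t * R) * Real.exp (α * (t * R) ^ 2 / 2)))
        ≤ n * C * (R + R ^ 2) * (Real.exp (α * R ^ 2 / 2) * Real.exp (c * t - c)) := hfac
      _ = K * Real.exp (c * t - c) := by rw [hK_def]; ring
  -- FTC
  have hcont : Continuous (deriv G) := (hG.contDiff : ContDiff ℂ 1 G).continuous_deriv le_rfl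
  have hcontR : Continuous (fun t : ℝ => deriv G (t:ℂ)) := hcont.comp Complex.continuous_ofReal
  have hint : IntervalIntegrable (fun t : ℝ => deriv G (t:ℂ)) volume 0 1 :=
    hcontR.intervalIntegrable 0 1
  have hftc : ∫ t in (0:ℝ)..1, deriv G (t:ℂ) = G 1 - G 0 := by
    have := intervalIntegral.integral_eq_sub_of_hasDerivAt
      (f := fun t : ℝ => G (t:ℂ)) (f' := fun t : ℝ => deriv G (t:ℂ))
      (fun t _ => ((hG (t:ℂ)).hasDerivAt.comp_ofReal)) hint
    simpa using this
  have hG1 : G 1 = f z := by rw [hG_def]; simp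
  have hG0 : G 0 = f 0 := by rw [hG_def]; simp
  -- integral of the exponential bound
  have hexp_int : ∫ t in (0:ℝ)..1, Real.exp (c * t - c) = (1 - Real.exp (-c)) / c := by
    have hF : ∀ t ∈ Set.uIcc (0:ℝ) 1, HasDerivAt (fun t => Real.exp (c * t - c) / c)
        (Real.exp (c * t - c)) t := by
      intro t _
      have h1 : HasDerivAt (fun t : ℝ => c * t - c) c t := by
        simpa using ((hasDerivAt_id t).const_mul c).sub_const c
      have h2 := (Real.hasDerivAt_exp (c * t - c)).comp t h1
      have h3 := h2.div_const c
      simpa [mul_div_assoc, mul_div_cancel_right₀ _ hc.ne'] using h3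
    have hint2 : IntervalIntegrable (fun t : ℝ => Real.exp (c * t - c)) volume 0 1 :=
      (Real.continuous_exp.comp ((continuous_const.mul continuous_id).sub continuous_const)).intervalIntegrable 0 1
    rw [intervalIntegral.integral_eq_sub_of_hasDerivAt hF hint2]
    simp only [mul_one, mul_zero, zero_sub, sub_self, Real.exp_zero]
    ring
  -- putting it together
  have hDint : IntervalIntegrable (fun t : ℝ => K * Real.exp (c * t - c)) volume 0 1 :=
    (continuous_const.mul (Real.continuous_exp.comp ((continuous_const.mul continuous_id).sub continuous_const))).intervalIntegrable 0 1
  have hnormint : ‖∫ t in (0:ℝ)..1, deriv G (t:ℂ)‖ ≤ ∫ t in (0:ℝ)..1, K * Real.exp (c * t - c) := by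
    refine (intervalIntegral.norm_integral_le_integral_norm (by norm_num)).trans ?_
    apply intervalIntegral.integral_mono_on (by norm_num) (hcontR.norm.intervalIntegrable 0 1) hDint
    exact hDbound
  have hmain : ‖f z - f 0‖ ≤ K * ((1 - Real.exp (-c)) / c) := by
    rw [show ‖f z - f 0‖ = ‖f z - f 0‖ from rfl, ← hG1, ← hG0, ← hftc]
    refine hnormint.trans ?_
    rw [intervalIntegral.integral_const_mul, hexp_int]
  -- final arithmetic
  have hkey : (R + R ^ 2) * ((1 - Real.exp (-c)) / c) ≤ Real.sqrt (2 / α) + 2 / α := by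
    have h1 : 1 - Real.exp (-c) ≤ Real.sqrt c := one_sub_exp_neg_le_sqrt c hc.le
    have h2 : 1 - Real.exp (-c) ≤ 1 := by linarith [Real.exp_pos (-c)]
    have hterm2 : R ^ 2 * ((1 - Real.exp (-c)) / c) ≤ 2 / α := by
      have : R ^ 2 * ((1 - Real.exp (-c)) / c) ≤ R ^ 2 * (1 / c) := by
        apply mul_le_mul_of_nonneg_left (div_le_div_of_nonneg_right ?_ hc.le) (sq_nonneg R)
        · exact h2
      refine this.trans ?_
      rw [hc_def]
      rw [show R ^ 2 * (1 / (α * R ^ 2 / 2)) = 2 / α * (R ^ 2 / R ^ 2) by ring]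
      rw [div_self (by positivity : R ^ 2 ≠ 0), mul_one]
    have hterm1 : R * ((1 - Real.exp (-c)) / c) ≤ Real.sqrt (2 / α) := by
      have hstep : R * ((1 - Real.exp (-c)) / c) ≤ R * (Real.sqrt c / c) := by
        apply mul_le_mul_of_nonneg_left (div_le_div_of_nonneg_right h1 hc.le) hR.le
      refine hstep.trans ?_
      set s : ℝ := Real.sqrt (α / 2) with hs_def
      have hs : 0 < s := Real.sqrt_pos.2 (by positivity)
      have hs2 : s ^ 2 = α / 2 := Real.sq_sqrt (by positivity)
      have hcs : c = (s * R) ^ 2 := by rw [hc_def]; rw [mul_pow, hs2]; ring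
      have hsqrtc : Real.sqrt c = s * R := by
        rw [hcs, Real.sqrt_sq (by positivity)]
      have hsqrt2a : Real.sqrt (2 / α) = 1 / s := by
        rw [show (2:ℝ) / α = (α / 2)⁻¹ by field_simp, Real.sqrt_inv, ← hs_def, one_div]
      refine le_of_eq ?_
      rw [hsqrtc, hcs, hsqrt2a]
      field_simp
    calc (R + R ^ 2) * ((1 - Real.exp (-c)) / c)
        = R * ((1 - Real.exp (-c)) / c) + R ^ 2 * ((1 - Real.exp (-c)) / c) := by ring
      _ ≤ Real.sqrt (2 / α) + 2 / α := add_le_add hterm1 hterm2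
  have htri : ‖f z‖ ≤ ‖f 0‖ + K * ((1 - Real.exp (-c)) / c) := by
    calc ‖f z‖ = ‖f 0 + (f z - f 0)‖ := by ring_nf
      _ ≤ ‖f 0‖ + ‖f z - f 0‖ := norm_add_le _ _
      _ ≤ ‖f 0‖ + K * ((1 - Real.exp (-c)) / c) := by linarith [hmain]
  have hexpc : Real.exp (-α * ‖z‖ ^ 2 / 2) = Real.exp (-c) := by
    rw [hc_def, hR_def]; ring_nf
  rw [hexpc]
  have hee : Real.exp (α * R ^ 2 / 2) * Real.exp (-c) = 1 := by
    rw [← Real.exp_add, hc_def]; ring_nf; exact Real.exp_zero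
  have hKe : K * Real.exp (-c) = n * C * (R + R ^ 2) := by
    rw [hK_def, mul_assoc, hee, mul_one]
  calc ‖f z‖ * Real.exp (-c)
      ≤ (‖f 0‖ + K * ((1 - Real.exp (-c)) / c)) * Real.exp (-c) := by
        apply mul_le_mul_of_nonneg_right htri (Real.exp_pos _).le
    _ = ‖f 0‖ * Real.exp (-c) + (K * Real.exp (-c)) * ((1 - Real.exp (-c)) / c) := by ring
    _ ≤ ‖f 0‖ * 1 + (n * C * (R + R ^ 2)) * ((1 - Real.exp (-c)) / c) := by
        rw [hKe]
        gcongr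
        · exact Real.exp_le_one_iff.2 (by nlinarith [hc.le])
    _ ≤ ‖f 0‖ + n * C * (Real.sqrt (2 / α) + 2 / α) := by
        rw [mul_one]
        have := mul_le_mul_of_nonneg_left hkey (by positivity : (0:ℝ) ≤ n * C)
        nlinarith [this]

theorem stmt11 (n : ℕ) (α : ℝ) (hα : 0 < α) (f : EuclideanSpace ℂ (Fin n) → ℂ)
    (hf : Differentiable ℂ f) :
    (∃ M : ℝ, ∀ z, ‖f z‖ * Real.exp (-α * ‖z‖ ^ 2 / 2) ≤ M) ↔
      ∃ C > (0 : ℝ), ∀ z : EuclideanSpace ℂ (Fin n), ∀ k : Fin n,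
        ‖fderiv ℂ f z (EuclideanSpace.single k 1)‖ ≤
          C * (1 + ‖z‖) * Real.exp (α * ‖z‖ ^ 2 / 2) := by
  constructor
  · rintro ⟨M, hM⟩
    exact fwd_aux n α hα f hf M hM
  · rintro ⟨C, hC0, hb⟩
    exact rev n α hα f hf C hC0 hb
end

section
/- An entire function f on ℂⁿ belongs to F^∞_α if and only if there exists C > 0 such that |Rf(z)| ≤ C(1+|z|²)e^{α|z|²/2} for all z ∈ ℂⁿ, where Rf(z) = ∑ₖ zₖ ∂f/∂zₖ(z) is the radial derivative. -/
set_option maxHeartbeats 1000000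

open Metric Real

theorem stmt12 (n : ℕ) (α : ℝ) (hα : 0 < α) (f : EuclideanSpace ℂ (Fin n) → ℂ)
    (hf : Differentiable ℂ f) :
    (∃ M : ℝ, ∀ z, ‖f z‖ * Real.exp (-α * ‖z‖ ^ 2 / 2) ≤ M) ↔
      ∃ C > (0 : ℝ), ∀ z : EuclideanSpace ℂ (Fin n),
        ‖fderiv ℂ f z z‖ ≤
          C * (1 + ‖z‖ ^ 2) * Real.exp (α * ‖z‖ ^ 2 / 2) := by
  constructor
  · rintro ⟨M, hM⟩
    have hM0 : (0:ℝ) ≤ M := le_trans (by positivity) (hM 0)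
    have hMf : ∀ z : EuclideanSpace ℂ (Fin n), ‖f z‖ ≤ M * Real.exp (α * ‖z‖ ^ 2 / 2) := by
      intro z
      have h := hM z
      have he : Real.exp (-α * ‖z‖ ^ 2 / 2) = (Real.exp (α * ‖z‖ ^ 2 / 2))⁻¹ := by
        rw [← Real.exp_neg]; ring_nf
      rw [he, ← div_eq_mul_inv, div_le_iff₀ (Real.exp_pos _)] at h
      simpa using h
    refine ⟨(M + 1) * Real.exp (3 * α / 2), by positivity, fun z => ?_⟩
    have hz1 : (0:ℝ) < 1 + ‖z‖ ^ 2 := by positivity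
    set r : ℝ := (1 + ‖z‖ ^ 2)⁻¹ with hrdef
    have hr0 : 0 < r := by positivity
    have hr1 : r ≤ 1 := by
      rw [hrdef]
      exact inv_le_one_of_one_le₀ (by nlinarith [sq_nonneg ‖z‖])
    have hrz : r * ‖z‖ ^ 2 ≤ 1 := by
      rw [hrdef, inv_mul_le_iff₀ hz1]; nlinarith [sq_nonneg ‖z‖]
    set g : ℂ → ℂ := fun w => f (w • z) with hgdef
    have hgd : Differentiable ℂ g := hf.comp (differentiable_id.smul_const z)
    have hDg : HasDerivAt g (fderiv ℂ f z z) 1 := by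
      have h1 : HasDerivAt (fun w : ℂ => w • z) z 1 := by
        simpa using (hasDerivAt_id (1:ℂ)).smul_const z
      have h2 : HasFDerivAt f (fderiv ℂ f ((1:ℂ) • z)) ((fun w : ℂ => w • z) 1) :=
        (hf _).hasFDerivAt
      have h3 := h2.comp_hasDerivAt 1 h1
      simp only [one_smul] at h3; exact h3
    set K : ℝ := M * Real.exp (3 * α / 2) * Real.exp (α * ‖z‖ ^ 2 / 2) with hKdef
    have hsb : ∀ w ∈ sphere (1:ℂ) r, ‖g w‖ ≤ K := by
      intro w hw
      have hw1 : ‖w - 1‖ = r := by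
        simpa [Complex.dist_eq] using mem_sphere_iff_norm.mp hw
      have habs : ‖w‖ ≤ 1 + r := by
        calc ‖w‖ = ‖w - 1 + 1‖ := by ring_nf
          _ ≤ ‖w - 1‖ + ‖(1:ℂ)‖ := norm_add_le _ _
          _ = r + 1 := by rw [hw1]; simp
          _ = 1 + r := by ring
      have hnwz : ‖w • z‖ = ‖w‖ * ‖z‖ := by
        rw [norm_smul]
      have hsq : ‖w • z‖ ^ 2 ≤ ‖z‖ ^ 2 + 3 := by
        have h1 : ‖w • z‖ ^ 2 ≤ (1 + r) ^ 2 * ‖z‖ ^ 2 := by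
          rw [hnwz, mul_pow]
          have : ‖w‖ ^ 2 ≤ (1 + r) ^ 2 := by
            apply pow_le_pow_left₀ (norm_nonneg w) habs
          nlinarith [sq_nonneg ‖z‖]
        have h2 : (1 + r) ^ 2 * ‖z‖ ^ 2 ≤ (1 + 3 * r) * ‖z‖ ^ 2 := by
          have : (1 + r) ^ 2 ≤ 1 + 3 * r := by nlinarith
          nlinarith [sq_nonneg ‖z‖]
        have h3 : (1 + 3 * r) * ‖z‖ ^ 2 ≤ ‖z‖ ^ 2 + 3 := by nlinarith
        linarith
      have := hMf (w • z)
      calc ‖g w‖ = ‖f (w • z)‖ := rfl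
        _ ≤ M * Real.exp (α * ‖w • z‖ ^ 2 / 2) := this
        _ ≤ M * Real.exp (α * (‖z‖ ^ 2 + 3) / 2) := by
            apply mul_le_mul_of_nonneg_left _ hM0
            apply Real.exp_le_exp.mpr
            have := hsq
            nlinarith
        _ = K := by
            rw [hKdef, mul_assoc, ← Real.exp_add]
            congr 1
            ring
    have hcauchy : ‖deriv g 1‖ ≤ K / r :=
      Complex.norm_deriv_le_of_forall_mem_sphere_norm_le hr0 hgd.diffContOnCl hsb
    have hKr : K / r = K * (1 + ‖z‖ ^ 2) := by
      rw [hrdef]; field_simp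
    rw [hDg.deriv] at hcauchy
    calc ‖fderiv ℂ f z z‖ ≤ K / r := hcauchy
      _ = M * Real.exp (3 * α / 2) * Real.exp (α * ‖z‖ ^ 2 / 2) * (1 + ‖z‖ ^ 2) := by
          rw [hKr]
      _ ≤ (M + 1) * Real.exp (3 * α / 2) * (1 + ‖z‖ ^ 2) * Real.exp (α * ‖z‖ ^ 2 / 2) := by
          nlinarith [Real.exp_pos (3 * α / 2), Real.exp_pos (α * ‖z‖ ^ 2 / 2), hz1,
            mul_pos (Real.exp_pos (3 * α / 2)) (mul_pos hz1 (Real.exp_pos (α * ‖z‖ ^ 2 / 2)))]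
  · rintro ⟨C, hC0, hC⟩
    obtain ⟨B, hB⟩ := (isCompact_closedBall (0 : EuclideanSpace ℂ (Fin n)) 1).exists_bound_of_continuousOn
      hf.continuous.continuousOn
    have hB0 : 0 ≤ B := le_trans (norm_nonneg _) (hB 0 (by simp))
    refine ⟨B + 2 * C / α, fun z => ?_⟩
    have key : ‖f z‖ ≤ (B + 2 * C / α) * Real.exp (α * ‖z‖ ^ 2 / 2) := by
      rcases le_or_gt ‖z‖ 1 with hz | hz
      · have h1 : ‖f z‖ ≤ B := hB z (by simpa [Metric.mem_closedBall] using hz)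
        have h2 : (1:ℝ) ≤ Real.exp (α * ‖z‖ ^ 2 / 2) := by
          apply Real.one_le_exp; positivity
        nlinarith [div_pos (by linarith : (0:ℝ) < 2 * C) hα]
      · set R : ℝ := ‖z‖ with hRdef
        have hR0 : (0:ℝ) < R := lt_trans one_pos hz
        set ω : EuclideanSpace ℂ (Fin n) := R⁻¹ • z with hωdef
        have hωn : ‖ω‖ = 1 := by
          rw [hωdef, norm_smul, norm_inv, Real.norm_eq_abs, abs_of_pos hR0, ← hRdef]
          field_simp
        have hRω : R • ω = z := by
          rw [hωdef, smul_inv_smul₀ hR0.ne']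
        have hhd : ∀ s : ℝ, HasDerivAt (fun t : ℝ => f (t • ω)) (fderiv ℂ f (s • ω) ω) s := by
          intro s
          have h1 : HasDerivAt (fun t : ℝ => t • ω) ω s := by
            simpa using (hasDerivAt_id s).smul_const ω
          have h2 := ((hf (s • ω)).hasFDerivAt.restrictScalars ℝ).comp_hasDerivAt s h1
          exact h2
        set Bf : ℝ → ℝ := fun s => B + (2 * C / α) * Real.exp (α * s ^ 2 / 2) with hBfdef
        have hBf' : ∀ s : ℝ, HasDerivAt Bf (2 * C * s * Real.exp (α * s ^ 2 / 2)) s := by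
          intro s
          have h1 : HasDerivAt (fun s : ℝ => α * s ^ 2 / 2) (α * s) s := by
            have := ((hasDerivAt_pow 2 s).const_mul α).div_const 2
            simpa using this.congr_deriv (by ring)
          have h2 := (h1.exp).const_mul (2 * C / α)
          have h3 := h2.const_add B
          refine h3.congr_deriv ?_
          rw [div_mul_eq_mul_div, div_eq_iff hα.ne']
          ring
        have bound : ∀ s ∈ Set.Ico (1:ℝ) R, ‖fderiv ℂ f (s • ω) ω‖ ≤
            2 * C * s * Real.exp (α * s ^ 2 / 2) := by
          intro s hs
          have hs1 : (1:ℝ) ≤ s := hs.1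
          have hs0 : (0:ℝ) < s := lt_of_lt_of_le one_pos hs1
          have hsn : ‖s • ω‖ = s := by
            rw [norm_smul, Real.norm_eq_abs, abs_of_pos hs0, hωn, mul_one]
          have hsmul : fderiv ℂ f (s • ω) (s • ω) = s • fderiv ℂ f (s • ω) ω :=
            (fderiv ℂ f (s • ω)).map_smul_of_tower s ω
          have hRf := hC (s • ω)
          rw [hsmul, norm_smul, Real.norm_eq_abs, abs_of_pos hs0,
            hsn] at hRf
          have hexp : (0:ℝ) < Real.exp (α * s ^ 2 / 2) := Real.exp_pos _
          have h2 : C * (1 + s ^ 2) * Real.exp (α * s ^ 2 / 2) ≤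
              s * (2 * C * s * Real.exp (α * s ^ 2 / 2)) := by
            nlinarith [mul_nonneg (mul_nonneg hC0.le
              (by nlinarith : (0:ℝ) ≤ s ^ 2 - 1)) hexp.le]
          have := le_trans hRf h2
          exact le_of_mul_le_mul_left (by linarith) hs0
        have hcont : ContinuousOn (fun t : ℝ => f (t • ω)) (Set.Icc 1 R) :=
          fun s _ => ((hhd s).continuousAt).continuousWithinAt
        have ha : ‖f ((1:ℝ) • ω)‖ ≤ Bf 1 := by
          rw [one_smul, hBfdef]
          have h1 : ‖f ω‖ ≤ B := hB ω (by simp [Metric.mem_closedBall, hωn])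
          have : (0:ℝ) < (2 * C / α) * Real.exp (α * 1 ^ 2 / 2) := by positivity
          linarith
        have hmain := image_norm_le_of_norm_deriv_right_le_deriv_boundary hcont
          (fun s _ => (hhd s).hasDerivWithinAt) ha hBf' bound
          (Set.right_mem_Icc.2 hz.le)
        rw [hRω] at hmain
        have h2 : (1:ℝ) ≤ Real.exp (α * R ^ 2 / 2) := by
          apply Real.one_le_exp; positivity
        calc ‖f z‖ ≤ B + (2 * C / α) * Real.exp (α * R ^ 2 / 2) := hmain
          _ ≤ (B + 2 * C / α) * Real.exp (α * R ^ 2 / 2) := by nlinarith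
          _ = (B + 2 * C / α) * Real.exp (α * ‖z‖ ^ 2 / 2) := by rw [hRdef]
    have he : Real.exp (-α * ‖z‖ ^ 2 / 2) = (Real.exp (α * ‖z‖ ^ 2 / 2))⁻¹ := by
      rw [← Real.exp_neg]; ring_nf
    rw [he, ← div_eq_mul_inv, div_le_iff₀ (Real.exp_pos _)]
    exact key
end

section
/- If an entire function f on ℂⁿ satisfies |Rf(z)| ≤ C(1+|z|²)e^{α|z|²/2} for all z, where Rf is the radial derivative, then there exists C' > 0 with |f(z) − f(0)| ≤ C' e^{α|z|²/2} for all z ∈ ℂⁿ. (Key step: f(z) − f(0) = ∫₀¹ Rf(tz) dt/t.) -/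
set_option maxHeartbeats 1000000

open MeasureTheory intervalIntegral

theorem stmt13 (n : ℕ) (α : ℝ) (hα : 0 < α) (f : EuclideanSpace ℂ (Fin n) → ℂ)
    (hf : Differentiable ℂ f) (C : ℝ)
    (h : ∀ z : EuclideanSpace ℂ (Fin n),
      ‖fderiv ℂ f z z‖ ≤ C * (1 + ‖z‖ ^ 2) * Real.exp (α * ‖z‖ ^ 2 / 2)) :
    ∃ C' > (0 : ℝ), ∀ z : EuclideanSpace ℂ (Fin n),
      ‖f z - f 0‖ ≤ C' * Real.exp (α * ‖z‖ ^ 2 / 2) := by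
  have hC0 : 0 ≤ C := by simpa using h 0
  have hCpos : (0:ℝ) < 2 * C * (2 + 6 / α) + 1 := by
    have h6 : 0 < 6 / α := div_pos (by norm_num) hα
    nlinarith
  refine ⟨2 * C * (2 + 6 / α) + 1, hCpos, ?_⟩
  intro z
  rcases eq_or_ne z 0 with rfl | hz
  · have h0 : ‖f 0 - f 0‖ = 0 := by simp
    rw [h0]
    exact (mul_pos hCpos (Real.exp_pos _)).le
  set x : ℝ := ‖z‖ ^ 2 with hxdef
  have hx : 0 < x := pow_pos (norm_pos_iff.mpr hz) 2
  set c : ℝ := α * x / 2 with hcdef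
  have hc : 0 < c := by positivity
  -- the one-variable function g
  set g : ℂ → ℂ := fun w => f (w • z) with hgdef
  have hgd : ∀ w : ℂ, HasDerivAt g (fderiv ℂ f (w • z) z) w := by
    intro w
    have h1 : HasDerivAt (fun w : ℂ => w • z) z w := by
      simpa using (hasDerivAt_id w).smul_const z
    exact (hf (w • z)).hasFDerivAt.comp_hasDerivAt w h1
  have hgdiff : Differentiable ℂ g := fun w => (hgd w).differentiableAt
  set G : ℂ → ℂ := deriv g with hGdef
  have hG : ∀ w : ℂ, G w = fderiv ℂ f (w • z) z := fun w => (hgd w).deriv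
  have hGdiff : Differentiable ℂ G := by
    have := (hgdiff.differentiableOn.analyticOnNhd isOpen_univ).deriv
    exact fun w => (this w (Set.mem_univ w)).differentiableAt
  have hGcont : Continuous G := hGdiff.continuous
  -- maximum modulus bound
  have key : ∀ r : ℝ, 1 / 2 ≤ r → r ≤ 1 → ∀ w : ℂ, ‖w‖ ≤ r →
      ‖G w‖ ≤ 2 * C * (1 + x) * Real.exp (α * r * x / 2) := by
    intro r hr1 hr2 w hw
    have hr0 : (0 : ℝ) < r := lt_of_lt_of_le (by norm_num) hr1
    have hb : ∀ u ∈ frontier (Metric.ball (0 : ℂ) r),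
        ‖G u‖ ≤ C / r * (1 + r ^ 2 * x) * Real.exp (α * (r ^ 2 * x) / 2) := by
      intro u hu
      rw [frontier_ball _ hr0.ne'] at hu
      have hu' : ‖u‖ = r := by simpa using mem_sphere_zero_iff_norm.mp hu
      have hnorm : ‖u • z‖ = r * ‖z‖ := by rw [norm_smul, hu']
      have h2 := h (u • z)
      rw [hnorm] at h2
      have hfd : (fderiv ℂ f (u • z)) (u • z) = u • (fderiv ℂ f (u • z)) z :=
        (fderiv ℂ f (u • z)).map_smul u z
      rw [hfd] at h2
      have habs : ‖u • (fderiv ℂ f (u • z)) z‖ = r * ‖G u‖ := by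
        rw [hG u]
        simp only [smul_eq_mul, norm_mul]
        rw [hu']
      rw [habs] at h2
      have hsq : (r * ‖z‖) ^ 2 = r ^ 2 * x := by rw [hxdef]; ring
      rw [hsq] at h2
      rw [div_mul_eq_mul_div, div_mul_eq_mul_div, le_div_iff₀ hr0]
      calc ‖G u‖ * r = r * ‖G u‖ := by ring
        _ ≤ C * (1 + r ^ 2 * x) * Real.exp (α * (r ^ 2 * x) / 2) := h2
    have hmem : w ∈ closure (Metric.ball (0 : ℂ) r) := by
      rw [closure_ball (0:ℂ) hr0.ne']
      exact mem_closedBall_zero_iff.mpr hw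
    have hmax := Complex.norm_le_of_forall_mem_frontier_norm_le Metric.isBounded_ball
      hGdiff.diffContOnCl hb hmem
    refine hmax.trans ?_
    have e1 : Real.exp (α * (r ^ 2 * x) / 2) ≤ Real.exp (α * r * x / 2) := by
      apply Real.exp_le_exp.2
      nlinarith [mul_nonneg (mul_nonneg (mul_nonneg hα.le hx.le) hr0.le)
        (sub_nonneg.mpr hr2)]
    have e2 : C / r * (1 + r ^ 2 * x) ≤ 2 * C * (1 + x) := by
      rw [div_mul_eq_mul_div, div_le_iff₀ hr0]
      nlinarith [mul_nonneg hC0 hx.le, mul_nonneg (mul_nonneg hC0 hx.le) hr0.le]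
    have hnn : 0 ≤ C / r * (1 + r ^ 2 * x) := by positivity
    exact mul_le_mul e2 e1 (Real.exp_pos _).le (by positivity)
  -- pointwise bound on [0,1]
  have hpt : ∀ t ∈ Set.uIoc (0 : ℝ) 1,
      ‖G t‖ ≤ 2 * C * (1 + x) * (Real.exp (α * x / 4) + Real.exp (c * t)) := by
    intro t ht
    rw [Set.uIoc_of_le (by norm_num : (0:ℝ) ≤ 1)] at ht
    obtain ⟨ht0, ht1⟩ := ht
    have habs : ‖(t : ℂ)‖ = t := by
      rw [Complex.norm_real, Real.norm_eq_abs, abs_of_nonneg ht0.le]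
    have hKnn : (0:ℝ) ≤ 2 * C * (1 + x) := by positivity
    rcases le_or_gt t (1 / 2) with htc | htc
    · have hkey := key (1 / 2) le_rfl (by norm_num) t (by rw [habs]; exact htc)
      have harg : α * (1 / 2) * x / 2 = α * x / 4 := by ring
      rw [harg] at hkey
      refine hkey.trans ?_
      nlinarith [mul_nonneg hKnn (Real.exp_pos (c * t)).le]
    · have hkey := key t htc.le ht1 t (by rw [habs])
      have harg : α * t * x / 2 = c * t := by rw [hcdef]; ring
      rw [harg] at hkey
      refine hkey.trans ?_
      nlinarith [mul_nonneg hKnn (Real.exp_pos (α * x / 4)).le]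
  -- FTC
  have hGRcont : Continuous fun t : ℝ => G t := hGcont.comp Complex.continuous_ofReal
  have hftc : ∫ t in (0:ℝ)..1, G t = f z - f 0 := by
    have hd : ∀ t ∈ Set.uIcc (0:ℝ) 1, HasDerivAt (fun s : ℝ => g s) (G t) t := by
      intro t _
      exact hG (t : ℂ) ▸ (hgd (t : ℂ)).comp_ofReal
    have := intervalIntegral.integral_eq_sub_of_hasDerivAt hd
      (hGRcont.intervalIntegrable 0 1)
    rw [this]
    simp [hgdef]
  -- bound the integral
  have hBcont : Continuous (fun t : ℝ =>
      2 * C * (1 + x) * (Real.exp (α * x / 4) + Real.exp (c * t))) := by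
    apply Continuous.mul continuous_const
    exact Continuous.add continuous_const
      (Real.continuous_exp.comp (continuous_const.mul continuous_id))
  have hbound : ‖∫ t in (0:ℝ)..1, G t‖ ≤
      |∫ t in (0:ℝ)..1, 2 * C * (1 + x) * (Real.exp (α * x / 4) + Real.exp (c * t))| :=
    intervalIntegral.norm_integral_le_abs_of_norm_le
      (MeasureTheory.ae_restrict_of_forall_mem measurableSet_uIoc hpt)
      (hBcont.intervalIntegrable 0 1)
  -- compute the integral of the bound
  have hIexp : ∫ t in (0:ℝ)..1, Real.exp (c * t) = (Real.exp c - 1) * c⁻¹ := by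
    rw [intervalIntegral.integral_comp_mul_left Real.exp hc.ne']
    simp [smul_eq_mul]
    ring
  have hIB : (∫ t in (0:ℝ)..1, 2 * C * (1 + x) * (Real.exp (α * x / 4) + Real.exp (c * t)))
      = 2 * C * (1 + x) * (Real.exp (α * x / 4) + (Real.exp c - 1) * c⁻¹) := by
    rw [intervalIntegral.integral_const_mul,
      intervalIntegral.integral_add intervalIntegrable_const
        ((by continuity : Continuous fun t : ℝ => Real.exp (c * t)).intervalIntegrable 0 1),
      intervalIntegral.integral_const, hIexp]
    simp
  -- final arithmetic
  have hEeq : Real.exp (α * x / 4) * Real.exp (α * x / 4) = Real.exp c := by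
    rw [← Real.exp_add]
    congr 1
    rw [hcdef]; ring
  have hA1 : Real.exp (α * x / 4) ≤ Real.exp c := by
    apply Real.exp_le_exp.2
    rw [hcdef]; nlinarith [hx.le, hα.le, mul_nonneg hα.le hx.le]
  have hA2 : x * Real.exp (α * x / 4) ≤ 4 / α * Real.exp c := by
    have hx4 : x ≤ 4 / α * Real.exp (α * x / 4) := by
      rw [div_mul_eq_mul_div, le_div_iff₀ hα]
      nlinarith [Real.add_one_le_exp (α * x / 4)]
    calc x * Real.exp (α * x / 4)
        ≤ (4 / α * Real.exp (α * x / 4)) * Real.exp (α * x / 4) :=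
          mul_le_mul_of_nonneg_right hx4 (Real.exp_pos _).le
      _ = 4 / α * (Real.exp (α * x / 4) * Real.exp (α * x / 4)) := by ring
      _ = 4 / α * Real.exp c := by rw [hEeq]
  have hB1 : (Real.exp c - 1) * c⁻¹ ≤ Real.exp c := by
    rw [← div_eq_mul_inv, div_le_iff₀ hc]
    have h1 : 1 - c ≤ Real.exp (-c) := by
      have := Real.add_one_le_exp (-c); linarith
    have h2 : Real.exp (-c) * Real.exp c = 1 := by rw [← Real.exp_add]; simp
    nlinarith [mul_le_mul_of_nonneg_right h1 (Real.exp_pos c).le]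
  have hB2 : x * ((Real.exp c - 1) * c⁻¹) ≤ 2 / α * Real.exp c := by
    have hxc : x * c⁻¹ = 2 / α := by
      rw [hcdef]; field_simp
    calc x * ((Real.exp c - 1) * c⁻¹) = (x * c⁻¹) * (Real.exp c - 1) := by ring
      _ = 2 / α * (Real.exp c - 1) := by rw [hxc]
      _ ≤ 2 / α * Real.exp c := by
          apply mul_le_mul_of_nonneg_left _ (by positivity)
          linarith
  have hmain : 2 * C * (1 + x) * (Real.exp (α * x / 4) + (Real.exp c - 1) * c⁻¹)
      ≤ 2 * C * (2 + 6 / α) * Real.exp c := by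
    have e1 := mul_le_mul_of_nonneg_left hA1 hC0
    have e2 := mul_le_mul_of_nonneg_left hA2 hC0
    have e3 := mul_le_mul_of_nonneg_left hB1 hC0
    have e4 := mul_le_mul_of_nonneg_left hB2 hC0
    have lhs_eq : 2 * C * (1 + x) * (Real.exp (α * x / 4) + (Real.exp c - 1) * c⁻¹)
        = 2 * (C * Real.exp (α * x / 4) + C * (x * Real.exp (α * x / 4))
          + C * ((Real.exp c - 1) * c⁻¹) + C * (x * ((Real.exp c - 1) * c⁻¹))) := by ring
    have rhs_eq : 2 * C * (2 + 6 / α) * Real.exp c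
        = 2 * (C * Real.exp c + C * (4 / α * Real.exp c)
          + C * Real.exp c + C * (2 / α * Real.exp c)) := by ring
    rw [lhs_eq, rhs_eq]
    linarith
  have hnnB : 0 ≤ Real.exp (α * x / 4) + (Real.exp c - 1) * c⁻¹ := by
    have : 0 ≤ (Real.exp c - 1) * c⁻¹ := by
      apply mul_nonneg _ (by positivity)
      linarith [Real.one_le_exp hc.le]
    positivity
  have final : ‖f z - f 0‖ ≤ 2 * C * (2 + 6 / α) * Real.exp c := by
    rw [← hftc]
    refine hbound.trans ?_
    rw [hIB, abs_of_nonneg (by positivity)]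
    exact hmain
  refine final.trans ?_
  have hce : c = α * x / 2 := hcdef
  nlinarith [Real.exp_pos c]
end
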